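/- arXiv:2312.14317 — 11 statements merged into one kernel-verified Lean document; each statement's English description precedes it below -/
import Mathlib

section
/- Fix r ≥ 1 and weights w_0,…,w_{r−1} : ℕ → ℂ with Σ_{k=0}^∞ k^j |w_ℓ(k)| < ∞ for every j ∈ ℕ and every ℓ. Assume the system is perfect, and for each multi-index m let P_m denote the unique monic m-orthogonal polynomial of degree |m|. Let n ∈ ℕ^r satisfy n_ℓ ≥ 1 for all ℓ. Then the r polynomials P_{n−e_0}, …, P_{n−e_{r−1}} form a basis of the ℂ-vector subspace V of ℂ[X] consisting of all polynomials Q with deg Q ≤ |n|−1 such that Σ_{k=0}^∞ Q(k) q(k) w_ℓ(k) = 0 for every ℓ ∈ {0,…,r−1} and every polynomial q with deg q ≤ n_ℓ−2; in particular, every Q ∈ V is a unique ℂ-linear combination of P_{n−e_0}, …, P_{n−e_{r−1}}. -/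
/-!
Test polynomials against the functionals `φ_ℓ Q = ∑ₖ Q(k) k^(n_ℓ - 1) w_ℓ(k)`: membership in `V`
together with `φ_ℓ Q = 0` for all `ℓ` is exactly `n`-orthogonality. By perfectness an
`n`-orthogonal polynomial `Q` of degree `< |n|` vanishes, since `P_n + Q` would be another monic
`n`-orthogonal polynomial of degree `|n|`; so the `φ_ℓ` separate the points of `V`. Each
`P_{n-e_ℓ}` lies in `V` and is killed by `φ_ℓ'` for `ℓ' ≠ ℓ` (it is orthogonal to degree `n_ℓ' - 1`
against `w_ℓ'`), but not by `φ_ℓ`, as it would vanish otherwise. A family biorthogonal to a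
separating family of functionals is a basis.
-/

open Polynomial

/-- `P` is `m`-orthogonal with respect to the discrete weights `w ℓ` on `ℕ`:
`∑_{k} P(k) q(k) w_ℓ(k) = 0` for every `ℓ` and every polynomial `q` of degree `≤ m_ℓ - 1`
(equivalently, `deg q < m_ℓ`). -/
def IsMultiOrth {r : ℕ} (w : Fin r → ℕ → ℂ) (m : Fin r → ℕ) (P : Polynomial ℂ) : Prop :=
  ∀ ℓ : Fin r, ∀ q : Polynomial ℂ, q.degree < (m ℓ : WithBot ℕ) →
    ∑' k : ℕ, P.eval (k : ℂ) * q.eval (k : ℂ) * w ℓ k = 0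

def HasFiniteMoments (w : ℕ → ℂ) : Prop :=
  ∀ j : ℕ, Summable fun k : ℕ => (k : ℝ) ^ j * ‖w k‖

theorem HasFiniteMoments.summable_eval_mul {w : ℕ → ℂ} (hw : HasFiniteMoments w) (Q : ℂ[X]) :
    Summable fun k : ℕ => Q.eval (k : ℂ) * w k := by
  have hmonomial : ∀ i, Summable fun k : ℕ => (k : ℂ) ^ i * w k := fun i =>
    .of_norm <| by simpa using hw i
  simp_rw [eval_eq_sum_range, Finset.sum_mul]
  exact summable_sum fun i _ => by simpa only [mul_assoc] using (hmonomial i).mul_left (Q.coeff i)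

noncomputable def momentFunctional (w : ℕ → ℂ) (hw : HasFiniteMoments w) : ℂ[X] →ₗ[ℂ] ℂ where
  toFun Q := ∑' k : ℕ, Q.eval (k : ℂ) * w k
  map_add' A B := by
    simp only [eval_add, add_mul]
    exact (hw.summable_eval_mul A).tsum_add (hw.summable_eval_mul B)
  map_smul' c A := by
    simp only [eval_smul, smul_eq_mul, mul_assoc, RingHom.id_apply]
    exact tsum_mul_left

section OrthDegreeLT

variable {R M : Type*} [CommSemiring R] [AddCommMonoid M] [Module R M]

def orthDegreeLT (L : R[X] →ₗ[R] M) (p : ℕ) : Submodule R R[X] where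
  carrier := {Q | ∀ q : R[X], q.degree < p → L (Q * q) = 0}
  add_mem' hA hB q hq := by rw [add_mul, map_add, hA q hq, hB q hq, add_zero]
  zero_mem' q _ := by rw [zero_mul, map_zero]
  smul_mem' c A hA q hq := by rw [smul_mul_assoc, map_smul, hA q hq, smul_zero]

variable {L : R[X] →ₗ[R] M} {p p' : ℕ} {Q : R[X]}

theorem mem_orthDegreeLT_iff_X_pow : Q ∈ orthDegreeLT L p ↔ ∀ i < p, L (Q * X ^ i) = 0 := by
  classical
  refine ⟨fun h i hi => h _ ((degree_X_pow_le i).trans_lt (by exact_mod_cast hi)), fun h q hq => ?_⟩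
  have hspan : degreeLT R p ≤ LinearMap.ker (L ∘ₗ LinearMap.mulLeft R Q) := by
    rw [degreeLT_eq_span_X_pow, Submodule.span_le]
    intro x hx
    obtain ⟨i, hi, rfl⟩ := Finset.mem_image.1 hx
    exact h i (Finset.mem_range.1 hi)
  exact hspan (mem_degreeLT.2 hq)

theorem mem_orthDegreeLT_succ :
    Q ∈ orthDegreeLT L (p + 1) ↔ Q ∈ orthDegreeLT L p ∧ L (Q * X ^ p) = 0 := by
  simp only [mem_orthDegreeLT_iff_X_pow, Nat.forall_lt_succ_right]

theorem orthDegreeLT_anti (h : p ≤ p') : orthDegreeLT L p' ≤ orthDegreeLT L p := fun _ hQ q hq =>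
  hQ q (hq.trans_le (by exact_mod_cast h))

end OrthDegreeLT

theorem mem_orthDegreeLT_momentFunctional {w : ℕ → ℂ} (hw : HasFiniteMoments w) {p : ℕ}
    {Q : ℂ[X]} : Q ∈ orthDegreeLT (momentFunctional w hw) p ↔
      ∀ q : ℂ[X], q.degree < p → ∑' k : ℕ, Q.eval (k : ℂ) * q.eval (k : ℂ) * w k = 0 := by
  simp [orthDegreeLT, momentFunctional]

theorem isMultiOrth_iff_forall_mem_orthDegreeLT {r : ℕ} {w : Fin r → ℕ → ℂ}
    (hw : ∀ ℓ, HasFiniteMoments (w ℓ)) {m : Fin r → ℕ} {Q : ℂ[X]} :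
    IsMultiOrth w m Q ↔ ∀ ℓ, Q ∈ orthDegreeLT (momentFunctional (w ℓ) (hw ℓ)) (m ℓ) := by
  simp only [IsMultiOrth, mem_orthDegreeLT_momentFunctional]

theorem eq_zero_of_isMultiOrth_of_degree_lt {r : ℕ} {w : Fin r → ℕ → ℂ}
    (hw : ∀ ℓ, HasFiniteMoments (w ℓ)) {m : Fin r → ℕ} {P Q : ℂ[X]} (hP : P.Monic)
    (hPdeg : P.natDegree = ∑ i, m i) (hPorth : IsMultiOrth w m P)
    (huniq : ∀ Q : ℂ[X], Q.Monic → Q.natDegree = ∑ i, m i → IsMultiOrth w m Q → Q = P)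
    (hQorth : IsMultiOrth w m Q) (hQdeg : Q.degree < (∑ i, m i : ℕ)) : Q = 0 := by
  have hlt : Q.degree < P.degree := by rwa [degree_eq_natDegree hP.ne_zero, hPdeg]
  have hsum : P + Q = P := by
    refine huniq _ (hP.add_of_left hlt) (by rw [natDegree_add_eq_left_of_degree_lt hlt, hPdeg]) ?_
    rw [isMultiOrth_iff_forall_mem_orthDegreeLT hw] at hPorth hQorth ⊢
    exact fun ℓ => add_mem (hPorth ℓ) (hQorth ℓ)
  exact add_eq_left.1 hsum

section Biorthogonal

variable {K M ι : Type*} [Field K] [AddCommGroup M] [Module K M] [Fintype ι]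
  {φ : ι → M →ₗ[K] K} {b : ι → M}

theorem apply_sum_smul_of_biorthogonal (hoff : ∀ i j, i ≠ j → φ i (b j) = 0) (c : ι → K)
    (i : ι) : φ i (∑ j, c j • b j) = c i * φ i (b i) := by
  rw [map_sum, Finset.sum_eq_single i (fun j _ hj => by rw [map_smul, hoff i j hj.symm, smul_zero])
    (fun h => absurd (Finset.mem_univ i) h), map_smul, smul_eq_mul]

theorem linearIndependent_of_biorthogonal (hoff : ∀ i j, i ≠ j → φ i (b j) = 0)
    (hdiag : ∀ i, φ i (b i) ≠ 0) : LinearIndependent K b :=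
  Fintype.linearIndependent_iff.2 fun c hc i => by
    simpa [hdiag i, hc] using (apply_sum_smul_of_biorthogonal hoff c i).symm

theorem existsUnique_sum_smul_of_biorthogonal {V : Submodule K M}
    (hoff : ∀ i j, i ≠ j → φ i (b j) = 0) (hdiag : ∀ i, φ i (b i) ≠ 0) (hb : ∀ i, b i ∈ V)
    (hker : ∀ x ∈ V, (∀ i, φ i x = 0) → x = 0) {x : M} (hx : x ∈ V) :
    ∃! c : ι → K, x = ∑ i, c i • b i := by
  have hcoeff : ∀ c : ι → K, x = ∑ i, c i • b i → c = fun i => φ i x / φ i (b i) := by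
    rintro c rfl
    funext i
    rw [apply_sum_smul_of_biorthogonal hoff, mul_div_cancel_right₀ _ (hdiag i)]
  refine ⟨_, ?_, hcoeff⟩
  have hsum_mem : ∑ i, (φ i x / φ i (b i)) • b i ∈ V := V.sum_mem fun i _ => V.smul_mem _ (hb i)
  refine sub_eq_zero.1 (hker _ (V.sub_mem hx hsum_mem) fun i => ?_)
  rw [map_sub, apply_sum_smul_of_biorthogonal hoff, div_mul_cancel₀ _ (hdiag i), sub_self]

end Biorthogonal

theorem sum_sub_ite_add_one {ι : Type*} [Fintype ι] [DecidableEq ι] {n : ι → ℕ} {ℓ : ι}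
    (h : 1 ≤ n ℓ) : ∑ i, (n i - if i = ℓ then 1 else 0) + 1 = ∑ i, n i := by
  have hle : ∀ i ∈ Finset.univ, (if i = ℓ then 1 else 0) ≤ n i := fun i _ => by
    split_ifs with hi
    exacts [hi ▸ h, Nat.zero_le _]
  have hsum_pos : 1 ≤ ∑ i, n i :=
    h.trans (Finset.single_le_sum (fun i _ => Nat.zero_le _) (Finset.mem_univ ℓ))
  rw [Finset.sum_tsub_distrib _ hle, Finset.sum_ite_eq' Finset.univ ℓ, if_pos (Finset.mem_univ ℓ)]
  omega

theorem basis_of_nearest_neighbors_general (r : ℕ) (w : Fin r → ℕ → ℂ)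
    (hmom : ∀ j : ℕ, ∀ ℓ : Fin r,
      Summable (fun k : ℕ => (k : ℝ) ^ j * ‖w ℓ k‖))
    (P : (Fin r → ℕ) → Polynomial ℂ)
    (hP : ∀ m : Fin r → ℕ, (P m).Monic ∧ (P m).natDegree = ∑ i, m i ∧
      IsMultiOrth w m (P m) ∧
      ∀ Q : Polynomial ℂ, Q.Monic → Q.natDegree = ∑ i, m i → IsMultiOrth w m Q → Q = P m)
    (n : Fin r → ℕ) (hn : ∀ ℓ, 1 ≤ n ℓ) :
    LinearIndependent ℂ (fun ℓ : Fin r => P (fun i => n i - if i = ℓ then 1 else 0)) ∧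
    (∀ ℓ : Fin r,
      (P (fun i => n i - if i = ℓ then 1 else 0)).degree < ((∑ i, n i : ℕ) : WithBot ℕ) ∧
      ∀ ℓ' : Fin r, ∀ q : Polynomial ℂ, q.degree < ((n ℓ' - 1 : ℕ) : WithBot ℕ) →
        ∑' k : ℕ, (P (fun i => n i - if i = ℓ then 1 else 0)).eval (k : ℂ) *
          q.eval (k : ℂ) * w ℓ' k = 0) ∧
    ∀ Q : Polynomial ℂ, Q.degree < ((∑ i, n i : ℕ) : WithBot ℕ) →
      (∀ ℓ : Fin r, ∀ q : Polynomial ℂ, q.degree < ((n ℓ - 1 : ℕ) : WithBot ℕ) →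
        ∑' k : ℕ, Q.eval (k : ℂ) * q.eval (k : ℂ) * w ℓ k = 0) →
      ∃! c : Fin r → ℂ,
        Q = ∑ ℓ : Fin r, c ℓ • P (fun i => n i - if i = ℓ then 1 else 0) := by
  have hw : ∀ ℓ, HasFiniteMoments (w ℓ) := fun ℓ j => hmom j ℓ
  let L ℓ := momentFunctional (w ℓ) (hw ℓ)
  let ν : Fin r → Fin r → ℕ := fun ℓ i => n i - if i = ℓ then 1 else 0
  let V : Submodule ℂ ℂ[X] := degreeLT ℂ (∑ i, n i) ⊓ ⨅ ℓ, orthDegreeLT (L ℓ) (n ℓ - 1)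
  let φ ℓ : ℂ[X] →ₗ[ℂ] ℂ := L ℓ ∘ₗ LinearMap.mulRight ℂ (X ^ (n ℓ - 1))
  have hV : ∀ Q, Q ∈ V ↔ Q.degree < (∑ i, n i : ℕ) ∧ ∀ ℓ, ∀ q : ℂ[X], q.degree < (n ℓ - 1 : ℕ) →
      ∑' k : ℕ, Q.eval (k : ℂ) * q.eval (k : ℂ) * w ℓ k = 0 := fun Q => by
    simp only [V, Submodule.mem_inf, Submodule.mem_iInf, mem_degreeLT, L,
      mem_orthDegreeLT_momentFunctional]
  have horth : ∀ m, ∀ ℓ, P m ∈ orthDegreeLT (L ℓ) (m ℓ) :=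
    fun m => (isMultiOrth_iff_forall_mem_orthDegreeLT hw).1 (hP m).2.2.1
  have hmem : ∀ ℓ, P (ν ℓ) ∈ V := fun ℓ => by
    refine Submodule.mem_inf.2 ⟨mem_degreeLT.2 ?_, Submodule.mem_iInf _ |>.2 fun ℓ' => ?_⟩
    · rw [← natDegree_lt_iff_degree_lt (hP _).1.ne_zero, (hP _).2.1, ← sum_sub_ite_add_one (hn ℓ)]
      exact Nat.lt_succ_self _
    · exact orthDegreeLT_anti (by dsimp only [ν]; split_ifs <;> omega) (horth (ν ℓ) ℓ')
  have hoff : ∀ ℓ ℓ', ℓ ≠ ℓ' → φ ℓ (P (ν ℓ')) = 0 := fun ℓ ℓ' hne => by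
    refine mem_orthDegreeLT_iff_X_pow.1 (horth (ν ℓ') ℓ) _ ?_
    simp only [ν, if_neg hne, tsub_zero]
    exact Nat.sub_lt (hn ℓ) one_pos
  have hker : ∀ Q ∈ V, (∀ ℓ, φ ℓ Q = 0) → Q = 0 := fun Q hQ hφ => by
    obtain ⟨hdeg, hQorth⟩ := Submodule.mem_inf.1 hQ
    refine eq_zero_of_isMultiOrth_of_degree_lt hw (hP n).1 (hP n).2.1 (hP n).2.2.1 (hP n).2.2.2
      ((isMultiOrth_iff_forall_mem_orthDegreeLT hw).2 fun ℓ => ?_) (mem_degreeLT.1 hdeg)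
    rw [← Nat.sub_add_cancel (hn ℓ), mem_orthDegreeLT_succ]
    exact ⟨Submodule.mem_iInf _ |>.1 hQorth ℓ, hφ ℓ⟩
  have hdiag : ∀ ℓ, φ ℓ (P (ν ℓ)) ≠ 0 := fun ℓ h0 =>
    (hP _).1.ne_zero <| hker _ (hmem ℓ) fun ℓ' => by
      rcases eq_or_ne ℓ' ℓ with rfl | hne
      exacts [h0, hoff ℓ' ℓ hne]
  exact ⟨linearIndependent_of_biorthogonal hoff hdiag, fun ℓ => (hV _).1 (hmem ℓ),
    fun Q hQdeg hQorth => existsUnique_sum_smul_of_biorthogonal hoff hdiag hmem hker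
      ((hV Q).2 ⟨hQdeg, hQorth⟩)⟩

/-- For a perfect system of discrete weights on `ℕ` with finite moments,
the polynomials `P_{n-e_0}, …, P_{n-e_{r-1}}` are linearly independent, each belongs to the
subspace `V` of polynomials of degree `≤ |n|-1` orthogonal to all polynomials of degree
`≤ n_ℓ - 2` against `w_ℓ`, and every element of `V` is a unique linear combination of them. -/
theorem basis_of_nearest_neighbors (r : ℕ) (hr : 1 ≤ r) (w : Fin r → ℕ → ℂ)
    (hmom : ∀ j : ℕ, ∀ ℓ : Fin r,
      Summable (fun k : ℕ => (k : ℝ) ^ j * ‖w ℓ k‖))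
    (P : (Fin r → ℕ) → Polynomial ℂ)
    (hP : ∀ m : Fin r → ℕ, (P m).Monic ∧ (P m).natDegree = ∑ i, m i ∧
      IsMultiOrth w m (P m) ∧
      ∀ Q : Polynomial ℂ, Q.Monic → Q.natDegree = ∑ i, m i → IsMultiOrth w m Q → Q = P m)
    (n : Fin r → ℕ) (hn : ∀ ℓ, 1 ≤ n ℓ) :
    LinearIndependent ℂ (fun ℓ : Fin r => P (fun i => n i - if i = ℓ then 1 else 0)) ∧
    (∀ ℓ : Fin r,
      (P (fun i => n i - if i = ℓ then 1 else 0)).degree < ((∑ i, n i : ℕ) : WithBot ℕ) ∧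
      ∀ ℓ' : Fin r, ∀ q : Polynomial ℂ, q.degree < ((n ℓ' - 1 : ℕ) : WithBot ℕ) →
        ∑' k : ℕ, (P (fun i => n i - if i = ℓ then 1 else 0)).eval (k : ℂ) *
          q.eval (k : ℂ) * w ℓ' k = 0) ∧
    ∀ Q : Polynomial ℂ, Q.degree < ((∑ i, n i : ℕ) : WithBot ℕ) →
      (∀ ℓ : Fin r, ∀ q : Polynomial ℂ, q.degree < ((n ℓ - 1 : ℕ) : WithBot ℕ) →
        ∑' k : ℕ, Q.eval (k : ℂ) * q.eval (k : ℂ) * w ℓ k = 0) →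
      ∃! c : Fin r → ℂ,
        Q = ∑ ℓ : Fin r, c ℓ • P (fun i => n i - if i = ℓ then 1 else 0) :=
  basis_of_nearest_neighbors_general r w hmom P hP n hn
end

section
/- Fix r ≥ 1 and weights w_0,…,w_{r−1} : ℕ → ℂ with Σ_{k=0}^∞ k^j |w_ℓ(k)| < ∞ for every j ∈ ℕ and every ℓ, assume the system is perfect, and for each multi-index m let P_m denote the unique monic m-orthogonal polynomial of degree |m|. Let n ∈ ℕ^r satisfy n_ℓ ≥ 1 for all ℓ and fix k ∈ {0,…,r−1}. Then for every ℓ the denominator D_ℓ := Σ_{m=0}^∞ P_{n−e_ℓ}(m)·(−m)_{n_ℓ−1}·w_ℓ(m) is nonzero, and, setting b_{n,k} := [coefficient of X^{|n|−1} in P_n] − [coefficient of X^{|n|} in P_{n+e_k}] and d_{n,ℓ} := (Σ_{m=0}^∞ m·P_n(m)·(−m)_{n_ℓ−1}·w_ℓ(m)) / D_ℓ, the nearest neighbor recurrence relation (X − b_{n,k})·P_n(X) − P_{n+e_k}(X) = Σ_{ℓ=0}^{r−1} d_{n,ℓ}·P_{n−e_ℓ}(X) holds in ℂ[X]. -/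
open Polynomial

/-- The rising Pochhammer symbol `(y)_m = y(y+1)⋯(y+m-1)`. -/
noncomputable def poch (y : ℂ) (m : ℕ) : ℂ := ∏ i ∈ Finset.range m, (y + i)

/-!
Put `R = (X - b) P_n - P_{n+e_k} - ∑ d_ℓ P_{n-e_ℓ}`. The choice of `b` cancels the two top
coefficients, so `deg R < |n|`. Each term is orthogonal, for the `ℓ`-th functional, to all
polynomials of degree `< n_ℓ - 1`, and `d_ℓ` is chosen so that `R` is moreover orthogonal to
`(-x)_{n_ℓ - 1}`, of exact degree `n_ℓ - 1`. Hence `R` is `n`-orthogonal, and uniqueness of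
`P_n`, applied to `P_n + R`, forces `R = 0`. The same argument gives `D_ℓ ≠ 0`: otherwise
`P_{n-e_ℓ}` would be a nonzero `n`-orthogonal polynomial of degree `< |n|`.
-/

namespace MultipleOrthogonal

section Orthogonality

variable {K ι : Type*} [Field K]

def orthSpace (φ : K[X] →ₗ[K] K) (s : ℕ) : Submodule K K[X] where
  carrier := {Q | ∀ q : K[X], q.degree < s → φ (Q * q) = 0}
  add_mem' {Q₁ Q₂} h₁ h₂ q hq := by rw [add_mul, map_add, h₁ q hq, h₂ q hq, add_zero]
  zero_mem' q _ := by rw [zero_mul, map_zero]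
  smul_mem' c Q h q hq := by rw [smul_mul_assoc, map_smul, h q hq, smul_zero]

variable {φ : K[X] →ₗ[K] K} {s : ℕ} {Q : K[X]}

theorem mem_orthSpace : Q ∈ orthSpace φ s ↔ ∀ q : K[X], q.degree < s → φ (Q * q) = 0 :=
  Iff.rfl

theorem orthSpace_antitone : Antitone (orthSpace φ) :=
  fun _ _ h _ hQ q hq => hQ q (hq.trans_le (by exact_mod_cast h))

theorem mul_mem_orthSpace {p : K[X]} {d : ℕ} (hp : p.natDegree ≤ d)
    (hQ : Q ∈ orthSpace φ (s + d)) : p * Q ∈ orthSpace φ s := by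
  intro q hq
  rw [mul_assoc, mul_left_comm]
  refine hQ _ ?_
  rcases eq_or_ne q 0 with rfl | hq0
  · simp
  rw [degree_eq_natDegree hq0, Nat.cast_lt] at hq
  calc (p * q).degree ≤ (p * q).natDegree := degree_le_natDegree
    _ ≤ (p.natDegree + q.natDegree : ℕ) := by exact_mod_cast natDegree_mul_le
    _ < (s + d : ℕ) := by exact_mod_cast (by omega)

/-- `degreeLT K (s + 1)` is spanned by `degreeLT K s` and any `π` of degree exactly `s`. -/
theorem mem_orthSpace_succ {π : K[X]} (hπ : π.degree = s) (hQ : Q ∈ orthSpace φ s)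
    (hQπ : φ (Q * π) = 0) : Q ∈ orthSpace φ (s + 1) := by
  intro q hq
  have hπ0 : π ≠ 0 := by rintro rfl; simp at hπ
  have hπs : π.natDegree = s := natDegree_eq_of_degree_eq_some hπ
  set c := q.coeff s / π.leadingCoeff
  have hrem : (q - C c * π).degree < s := by
    rw [degree_lt_iff_coeff_zero]
    intro j hj
    rw [coeff_sub, coeff_C_mul]
    rcases hj.eq_or_lt with rfl | hj
    · rw [← hπs, coeff_natDegree, hπs, div_mul_cancel₀ _ (leadingCoeff_ne_zero.2 hπ0), sub_self]
    · rw [coeff_eq_zero_of_degree_lt (hq.trans_le (by exact_mod_cast hj)),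
        coeff_eq_zero_of_natDegree_lt (hπs ▸ hj), mul_zero, sub_zero]
  calc φ (Q * q) = φ (Q * (q - C c * π)) + c * φ (Q * π) := by
        rw [← smul_eq_mul c, ← map_smul, ← map_add, smul_eq_C_mul]
        congr 1; ring
    _ = 0 := by rw [hQ _ hrem, hQπ, mul_zero, add_zero]

noncomputable def multiOrthSpace (L : ι → K[X] →ₗ[K] K) (m : ι → ℕ) : Submodule K K[X] :=
  ⨅ ℓ, orthSpace (L ℓ) (m ℓ)

theorem mem_multiOrthSpace {L : ι → K[X] →ₗ[K] K} {m : ι → ℕ} :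
    Q ∈ multiOrthSpace L m ↔ ∀ ℓ, Q ∈ orthSpace (L ℓ) (m ℓ) :=
  Submodule.mem_iInf _

theorem degree_sub_lt_of_nextCoeff_eq {p q : K[X]} {N : ℕ} (hp : p.Monic) (hq : q.Monic)
    (hpN : p.natDegree = N + 1) (hqN : q.natDegree = N + 1) (h : p.nextCoeff = q.nextCoeff) :
    (p - q).degree < N := by
  rw [nextCoeff_of_natDegree_pos (by omega), nextCoeff_of_natDegree_pos (by omega), hpN,
    hqN, Nat.add_sub_cancel] at h
  rw [degree_lt_iff_coeff_zero]
  intro j hj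
  rw [coeff_sub, sub_eq_zero]
  obtain rfl | rfl | hj : j = N ∨ j = N + 1 ∨ N + 1 < j := by omega
  · exact h
  · rw [← hpN, hp.coeff_natDegree, hpN, ← hqN, hq.coeff_natDegree]
  · rw [coeff_eq_zero_of_natDegree_lt (hpN ▸ hj), coeff_eq_zero_of_natDegree_lt (hqN ▸ hj)]

theorem degree_X_sub_C_mul_sub_lt {p p' : K[X]} (hp : p.Monic) (hp' : p'.Monic)
    (h : p'.natDegree = p.natDegree + 1) :
    ((X - C (p.nextCoeff - p'.nextCoeff)) * p - p').degree < (p.natDegree : WithBot ℕ) := by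
  have hX := monic_X_sub_C (p.nextCoeff - p'.nextCoeff)
  refine degree_sub_lt_of_nextCoeff_eq (hX.mul hp) hp' ?_ h ?_
  · rw [hX.natDegree_mul hp, natDegree_X_sub_C, add_comm]
  · rw [hX.nextCoeff_mul hp, nextCoeff_X_sub_C]; ring

end Orthogonality

section Perfect

variable {K ι : Type*} [Field K] [Fintype ι]

theorem sum_add_single [DecidableEq ι] (n : ι → ℕ) (k : ι) :
    ∑ i, (n + Pi.single k 1 : ι → ℕ) i = ∑ i, n i + 1 := by
  simp [Finset.sum_add_distrib]

theorem sum_sub_single [DecidableEq ι] {n : ι → ℕ} {ℓ : ι} (h : 1 ≤ n ℓ) :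
    ∑ i, (n - Pi.single ℓ 1 : ι → ℕ) i = ∑ i, n i - 1 := by
  have hn : n - Pi.single ℓ 1 + Pi.single ℓ 1 = n := by
    ext i
    obtain rfl | hi := eq_or_ne i ℓ <;> simp [*]
  have := sum_add_single (n - Pi.single ℓ 1) ℓ
  rw [hn] at this
  omega

/-- `P m` is the type II multiple orthogonal polynomial of index `m` of the perfect system `L`. -/
structure IsTypeIIMultipleOrthogonal (L : ι → K[X] →ₗ[K] K) (P : (ι → ℕ) → K[X]) : Prop where
  monic : ∀ m, (P m).Monic
  natDegree_eq : ∀ m, (P m).natDegree = ∑ i, m i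
  mem : ∀ m, P m ∈ multiOrthSpace L m
  eq_of_mem : ∀ m Q, Q.Monic → Q.natDegree = ∑ i, m i → Q ∈ multiOrthSpace L m → Q = P m

namespace IsTypeIIMultipleOrthogonal

variable {L : ι → K[X] →ₗ[K] K} {P : (ι → ℕ) → K[X]}

theorem degree_eq (hP : IsTypeIIMultipleOrthogonal L P) (m : ι → ℕ) :
    (P m).degree = (∑ i, m i : ℕ) := by
  rw [degree_eq_natDegree (hP.monic m).ne_zero, hP.natDegree_eq]

theorem mem_orthSpace_of_le (hP : IsTypeIIMultipleOrthogonal L P) {m : ι → ℕ} {ℓ : ι} {s : ℕ}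
    (h : s ≤ m ℓ) : P m ∈ orthSpace (L ℓ) s :=
  orthSpace_antitone h (mem_multiOrthSpace.1 (hP.mem m) ℓ)

theorem map_mul_eq_zero (hP : IsTypeIIMultipleOrthogonal L P) {m : ι → ℕ} {ℓ : ι} {q : K[X]}
    (hq : q.degree < m ℓ) : L ℓ (P m * q) = 0 :=
  hP.mem_orthSpace_of_le le_rfl q hq

theorem eq_zero_of_mem (hP : IsTypeIIMultipleOrthogonal L P) {m : ι → ℕ} {R : K[X]}
    (hR : R ∈ multiOrthSpace L m) (hdeg : R.degree < (∑ i, m i : ℕ)) : R = 0 := by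
  rw [← hP.degree_eq] at hdeg
  have hnat : (P m + R).natDegree = ∑ i, m i := by
    rw [natDegree_add_eq_left_of_degree_lt hdeg, hP.natDegree_eq]
  exact add_eq_left.1
    (hP.eq_of_mem m _ ((hP.monic m).add_of_left hdeg) hnat (add_mem (hP.mem m) hR))

variable [DecidableEq ι]

theorem map_mul_ne_zero (hP : IsTypeIIMultipleOrthogonal L P) {n : ι → ℕ} {ℓ : ι}
    (hn : 1 ≤ n ℓ) {π : K[X]} (hπ : π.degree = (n ℓ - 1 : ℕ)) :
    L ℓ (P (n - Pi.single ℓ 1) * π) ≠ 0 := by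
  intro h0
  have hmem : P (n - Pi.single ℓ 1) ∈ multiOrthSpace L n := by
    refine mem_multiOrthSpace.2 fun j => ?_
    obtain rfl | hj := eq_or_ne j ℓ
    · have hsucc : n j - 1 + 1 = n j := by omega
      rw [← hsucc]
      exact mem_orthSpace_succ hπ (hP.mem_orthSpace_of_le (by simp)) h0
    · exact hP.mem_orthSpace_of_le (by simp [hj])
  refine (hP.monic _).ne_zero (hP.eq_zero_of_mem hmem ?_)
  have hpos : 1 ≤ ∑ i, n i := hn.trans (Finset.single_le_sum (by simp) (Finset.mem_univ ℓ))
  rw [hP.degree_eq, sum_sub_single hn]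
  exact_mod_cast (by omega)

theorem remainder_mem_orthSpace (hP : IsTypeIIMultipleOrthogonal L P) {n : ι → ℕ} {ℓ : ι}
    (hn : 1 ≤ n ℓ) (k : ι) (b : K) (c : ι → K) :
    (X - C b) * P n - P (n + Pi.single k 1) - ∑ j, C (c j) * P (n - Pi.single j 1) ∈
      orthSpace (L ℓ) (n ℓ - 1) := by
  refine sub_mem (sub_mem (mul_mem_orthSpace (natDegree_X_sub_C_le b) ?_)
    (hP.mem_orthSpace_of_le ?_)) (sum_mem fun j _ => ?_)
  · exact hP.mem_orthSpace_of_le (by omega)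
  · simp only [Pi.add_apply]; omega
  · rw [C_mul']
    refine Submodule.smul_mem _ _ (hP.mem_orthSpace_of_le ?_)
    simp only [Pi.sub_apply, Pi.single_apply]
    split_ifs <;> omega

theorem degree_remainder_lt (hP : IsTypeIIMultipleOrthogonal L P) {n : ι → ℕ}
    (hn : ∀ ℓ, 1 ≤ n ℓ) (k : ι) (c : ι → K) :
    ((X - C ((P n).nextCoeff - (P (n + Pi.single k 1)).nextCoeff)) * P n -
        P (n + Pi.single k 1) - ∑ j, C (c j) * P (n - Pi.single j 1)).degree <
      ((∑ i, n i : ℕ) : WithBot ℕ) := by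
  have hsum : 1 ≤ ∑ i, n i := (hn k).trans (Finset.single_le_sum (by simp) (Finset.mem_univ k))
  refine mem_degreeLT.1 (sub_mem (mem_degreeLT.2 ?_) (sum_mem fun j _ => ?_))
  · rw [← hP.natDegree_eq]
    refine degree_X_sub_C_mul_sub_lt (hP.monic n) (hP.monic _) ?_
    rw [hP.natDegree_eq, hP.natDegree_eq, sum_add_single]
  · rw [C_mul']
    refine Submodule.smul_mem _ _ (mem_degreeLT.2 ?_)
    rw [hP.degree_eq, sum_sub_single (hn j)]
    exact_mod_cast (by omega)

theorem nearest_neighbor (hP : IsTypeIIMultipleOrthogonal L P) {n : ι → ℕ}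
    (hn : ∀ ℓ, 1 ≤ n ℓ) (k : ι) {π : ι → K[X]} (hπ : ∀ ℓ, (π ℓ).degree = (n ℓ - 1 : ℕ)) :
    (X - C ((P n).nextCoeff - (P (n + Pi.single k 1)).nextCoeff)) * P n -
        P (n + Pi.single k 1) =
      ∑ ℓ, C (L ℓ (X * P n * π ℓ) / L ℓ (P (n - Pi.single ℓ 1) * π ℓ)) *
        P (n - Pi.single ℓ 1) := by
  set b := (P n).nextCoeff - (P (n + Pi.single k 1)).nextCoeff
  set d : ι → K := fun ℓ => L ℓ (X * P n * π ℓ) / L ℓ (P (n - Pi.single ℓ 1) * π ℓ)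
  rw [← sub_eq_zero]
  change (X - C b) * P n - _ - ∑ ℓ, C (d ℓ) * P (n - Pi.single ℓ 1) = 0
  refine hP.eq_zero_of_mem (mem_multiOrthSpace.2 fun ℓ => ?_) (hP.degree_remainder_lt hn k d)
  have hπlt : ∀ m : ι → ℕ, n ℓ ≤ m ℓ → (π ℓ).degree < (m ℓ : ℕ) := fun m hm => by
    rw [hπ ℓ]; exact_mod_cast (by have := hn ℓ; omega)
  rw [show n ℓ = n ℓ - 1 + 1 by have := hn ℓ; omega]
  refine mem_orthSpace_succ (hπ ℓ) (hP.remainder_mem_orthSpace (hn ℓ) k b d) ?_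
  have hexpand : ((X - C b) * P n - P (n + Pi.single k 1) -
        ∑ j, C (d j) * P (n - Pi.single j 1)) * π ℓ =
      X * P n * π ℓ - b • (P n * π ℓ) - P (n + Pi.single k 1) * π ℓ -
        ∑ j, d j • (P (n - Pi.single j 1) * π ℓ) := by
    rw [sub_mul _ (∑ j, _), Finset.sum_mul]
    simp only [smul_eq_C_mul, mul_assoc]
    ring
  have hlowered : ∑ j, d j * L ℓ (P (n - Pi.single j 1) * π ℓ) = L ℓ (X * P n * π ℓ) := by
    rw [Finset.sum_eq_single ℓ]
    · exact div_mul_cancel₀ _ (hP.map_mul_ne_zero (hn ℓ) (hπ ℓ))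
    · intro j _ hj
      rw [hP.map_mul_eq_zero (hπlt _ (by simp [Ne.symm hj])), mul_zero]
    · simp
  rw [hexpand, map_sub, map_sub, map_sub, map_sum, map_smul,
    hP.map_mul_eq_zero (hπlt n le_rfl), hP.map_mul_eq_zero (hπlt _ (by simp))]
  simp only [map_smul, smul_eq_mul, hlowered]
  ring

end IsTypeIIMultipleOrthogonal

end Perfect

section Discrete

theorem summable_eval_mul {w : ℕ → ℂ}
    (hw : ∀ j : ℕ, Summable fun k : ℕ => (k : ℝ) ^ j * ‖w k‖) (f : ℂ[X]) :
    Summable fun k : ℕ => f.eval (k : ℂ) * w k := by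
  have hmonomial : ∀ j, Summable fun k : ℕ => f.coeff j * (k : ℂ) ^ j * w k := fun j =>
    .of_norm (((hw j).mul_left ‖f.coeff j‖).congr fun k => by
      simp only [norm_mul, norm_pow, Complex.norm_natCast]; ring)
  refine (summable_sum (s := Finset.range (f.natDegree + 1)) fun j _ => hmonomial j).congr
    fun k => ?_
  rw [eval_eq_sum_range, Finset.sum_mul]

noncomputable def weightFunctional (w : ℕ → ℂ)
    (hw : ∀ j : ℕ, Summable fun k : ℕ => (k : ℝ) ^ j * ‖w k‖) : ℂ[X] →ₗ[ℂ] ℂ where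
  toFun f := ∑' k : ℕ, f.eval (k : ℂ) * w k
  map_add' f g := by
    simp only [eval_add, add_mul]
    exact (summable_eval_mul hw f).tsum_add (summable_eval_mul hw g)
  map_smul' c f := by
    simp only [eval_smul, smul_eq_mul, mul_assoc, RingHom.id_apply]
    exact tsum_mul_left

theorem weightFunctional_apply {w : ℕ → ℂ}
    (hw : ∀ j : ℕ, Summable fun k : ℕ => (k : ℝ) ^ j * ‖w k‖) (f : ℂ[X]) :
    weightFunctional w hw f = ∑' k : ℕ, f.eval (k : ℂ) * w k :=
  rfl

theorem isMultiOrth_iff_mem_multiOrthSpace {r : ℕ} {w : Fin r → ℕ → ℂ}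
    (hw : ∀ j : ℕ, ∀ ℓ, Summable fun k : ℕ => (k : ℝ) ^ j * ‖w ℓ k‖) {m : Fin r → ℕ}
    {Q : ℂ[X]} :
    IsMultiOrth w m Q ↔ Q ∈ multiOrthSpace (fun ℓ => weightFunctional (w ℓ) (hw · ℓ)) m := by
  simp only [IsMultiOrth, mem_multiOrthSpace, mem_orthSpace, weightFunctional_apply, eval_mul]

/-- The polynomial `x ↦ (-x)_s`. -/
noncomputable def pochPoly (s : ℕ) : ℂ[X] :=
  ∏ i ∈ Finset.range s, (C (i : ℂ) - X)

theorem eval_pochPoly (s m : ℕ) : (pochPoly s).eval (m : ℂ) = poch (-(m : ℂ)) s := by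
  simp only [pochPoly, poch, eval_prod, eval_sub, eval_C, eval_X]
  exact Finset.prod_congr rfl fun i _ => by ring

theorem degree_pochPoly (s : ℕ) : (pochPoly s).degree = s := by
  have hfactor (i : ℕ) : (C (i : ℂ) - X).degree = 1 := by
    rw [← neg_sub, degree_neg, degree_X_sub_C]
  rw [pochPoly, degree_prod, Finset.sum_congr rfl fun i _ => hfactor i]
  simp

end Discrete

end MultipleOrthogonal

open MultipleOrthogonal

theorem nearest_neighbor_recurrence_general (r : ℕ) (w : Fin r → ℕ → ℂ)
    (hmom : ∀ j : ℕ, ∀ ℓ : Fin r,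
      Summable (fun k : ℕ => (k : ℝ) ^ j * ‖w ℓ k‖))
    (P : (Fin r → ℕ) → Polynomial ℂ)
    (hP : ∀ m : Fin r → ℕ, (P m).Monic ∧ (P m).natDegree = ∑ i, m i ∧
      IsMultiOrth w m (P m) ∧
      ∀ Q : Polynomial ℂ, Q.Monic → Q.natDegree = ∑ i, m i → IsMultiOrth w m Q → Q = P m)
    (n : Fin r → ℕ) (hn : ∀ ℓ, 1 ≤ n ℓ) (k : Fin r) :
    (∀ ℓ : Fin r,
      (∑' m : ℕ, (P (fun i => n i - if i = ℓ then 1 else 0)).eval (m : ℂ) *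
        poch (-(m : ℂ)) (n ℓ - 1) * w ℓ m) ≠ 0) ∧
    ((X : Polynomial ℂ) - C ((P n).coeff ((∑ i, n i) - 1) -
          (P (fun i => n i + if i = k then 1 else 0)).coeff (∑ i, n i))) * P n -
        P (fun i => n i + if i = k then 1 else 0) =
      ∑ ℓ : Fin r,
        C ((∑' m : ℕ, (m : ℂ) * (P n).eval (m : ℂ) * poch (-(m : ℂ)) (n ℓ - 1) * w ℓ m) /
            (∑' m : ℕ, (P (fun i => n i - if i = ℓ then 1 else 0)).eval (m : ℂ) *
              poch (-(m : ℂ)) (n ℓ - 1) * w ℓ m)) *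
          P (fun i => n i - if i = ℓ then 1 else 0) := by
  set L : Fin r → ℂ[X] →ₗ[ℂ] ℂ := fun ℓ => weightFunctional (w ℓ) (hmom · ℓ)
  have horth := fun m Q => isMultiOrth_iff_mem_multiOrthSpace hmom (m := m) (Q := Q)
  have hfam : IsTypeIIMultipleOrthogonal L P :=
    ⟨fun m => (hP m).1, fun m => (hP m).2.1, fun m => (horth m _).1 (hP m).2.2.1,
      fun m Q hQ hdeg hQm => (hP m).2.2.2 Q hQ hdeg ((horth m Q).2 hQm)⟩
  have hsub : ∀ ℓ, (fun i => n i - if i = ℓ then 1 else 0) = n - Pi.single ℓ 1 := fun ℓ => by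
    ext i; simp [Pi.single_apply]
  have hadd : (fun i => n i + if i = k then 1 else 0) = n + Pi.single k 1 := by
    ext i; simp [Pi.single_apply]
  have hden : ∀ ℓ, ∑' m : ℕ, (P (n - Pi.single ℓ 1)).eval (m : ℂ) * poch (-(m : ℂ)) (n ℓ - 1) *
      w ℓ m = L ℓ (P (n - Pi.single ℓ 1) * pochPoly (n ℓ - 1)) := fun ℓ => by
    simp [L, weightFunctional_apply, eval_pochPoly]
  have hnum : ∀ ℓ, ∑' m : ℕ, (m : ℂ) * (P n).eval (m : ℂ) * poch (-(m : ℂ)) (n ℓ - 1) * w ℓ m =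
      L ℓ (X * P n * pochPoly (n ℓ - 1)) := fun ℓ => by
    simp [L, weightFunctional_apply, eval_pochPoly]
  have hpos : 0 < ∑ i, n i := (hn k).trans (Finset.single_le_sum (by simp) (Finset.mem_univ k))
  have hb : (P n).coeff (∑ i, n i - 1) - (P (n + Pi.single k 1)).coeff (∑ i, n i) =
      (P n).nextCoeff - (P (n + Pi.single k 1)).nextCoeff := by
    rw [nextCoeff_of_natDegree_pos (by rwa [hfam.natDegree_eq]),
      nextCoeff_of_natDegree_pos (by rw [hfam.natDegree_eq, sum_add_single]; omega),
      hfam.natDegree_eq, hfam.natDegree_eq, sum_add_single, Nat.add_sub_cancel]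
  simp only [hsub, hadd, hden, hnum, hb]
  exact ⟨fun ℓ => hfam.map_mul_ne_zero (hn ℓ) (degree_pochPoly _),
    hfam.nearest_neighbor hn k fun ℓ => degree_pochPoly _⟩

/-- Nearest neighbor recurrence relation for type II discrete multiple
orthogonal polynomials of a perfect system: the denominators
`D_ℓ = ∑_m P_{n-e_ℓ}(m)(-m)_{n_ℓ-1} w_ℓ(m)` are nonzero and
`(X - b_{n,k}) P_n - P_{n+e_k} = ∑_ℓ d_{n,ℓ} P_{n-e_ℓ}`. -/
theorem nearest_neighbor_recurrence (r : ℕ) (hr : 1 ≤ r) (w : Fin r → ℕ → ℂ)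
    (hmom : ∀ j : ℕ, ∀ ℓ : Fin r,
      Summable (fun k : ℕ => (k : ℝ) ^ j * ‖w ℓ k‖))
    (P : (Fin r → ℕ) → Polynomial ℂ)
    (hP : ∀ m : Fin r → ℕ, (P m).Monic ∧ (P m).natDegree = ∑ i, m i ∧
      IsMultiOrth w m (P m) ∧
      ∀ Q : Polynomial ℂ, Q.Monic → Q.natDegree = ∑ i, m i → IsMultiOrth w m Q → Q = P m)
    (n : Fin r → ℕ) (hn : ∀ ℓ, 1 ≤ n ℓ) (k : Fin r) :
    (∀ ℓ : Fin r,
      (∑' m : ℕ, (P (fun i => n i - if i = ℓ then 1 else 0)).eval (m : ℂ) *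
        poch (-(m : ℂ)) (n ℓ - 1) * w ℓ m) ≠ 0) ∧
    ((X : Polynomial ℂ) - C ((P n).coeff ((∑ i, n i) - 1) -
          (P (fun i => n i + if i = k then 1 else 0)).coeff (∑ i, n i))) * P n -
        P (fun i => n i + if i = k then 1 else 0) =
      ∑ ℓ : Fin r,
        C ((∑' m : ℕ, (m : ℂ) * (P n).eval (m : ℂ) * poch (-(m : ℂ)) (n ℓ - 1) * w ℓ m) /
            (∑' m : ℕ, (P (fun i => n i - if i = ℓ then 1 else 0)).eval (m : ℂ) *
              poch (-(m : ℂ)) (n ℓ - 1) * w ℓ m)) *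
          P (fun i => n i - if i = ℓ then 1 else 0) :=
  nearest_neighbor_recurrence_general r w hmom P hP n hn k
end

section
/- Let r ≥ 1, let a_0,…,a_{r−1} be nonzero complex numbers, let n = (n_0,…,n_{r−1}) ∈ ℕ^r, and fix ℓ ∈ {0,…,r−1}. Suppose P ∈ ℂ[X] satisfies the Charlier orthogonality conditions for n: Σ_{k=0}^∞ P(k)·q(k)·a_i^k/k! = 0 for every i ∈ {0,…,r−1} and every polynomial q with deg q ≤ n_i−1. Define Q(x) := x·P(x−1) − a_ℓ·P(x). Then Q satisfies the Charlier orthogonality conditions for n + e_ℓ, namely Σ_{k=0}^∞ Q(k)·q(k)·a_i^k/k! = 0 for every i and every polynomial q with deg q ≤ n_i−1 when i ≠ ℓ, and with deg q ≤ n_ℓ when i = ℓ. Moreover, if P is monic of degree N, then Q is monic of degree N+1. -/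
open Polynomial

/-- The Charlier raising operator on polynomials: `(Φ_a P)(x) = x·P(x-1) - a·P(x)`. -/
noncomputable def raiseCharlier (a : ℂ) (P : Polynomial ℂ) : Polynomial ℂ :=
  X * P.comp (X - Polynomial.C 1) - Polynomial.C a * P

lemma summable_exp_aux (a : ℂ) : Summable (fun k : ℕ => a ^ k / (k.factorial : ℂ)) := by
  apply Summable.of_norm
  have := Real.summable_pow_div_factorial ‖a‖
  convert this using 2 with k
  simp [norm_div, norm_pow, Complex.norm_natCast]

lemma summable_desc_aux (a : ℂ) (n : ℕ) :
    Summable (fun k : ℕ => (descPochhammer ℂ n).eval (k : ℂ) * (a ^ k / (k.factorial : ℂ))) := by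
  have heq : (fun k : ℕ => (descPochhammer ℂ n).eval (k : ℂ) * (a ^ k / (k.factorial : ℂ)))
      = fun k : ℕ => if n ≤ k then a ^ k / (((k - n).factorial : ℕ) : ℂ) else 0 := by
    funext k
    rw [descPochhammer_eval_eq_descFactorial]
    by_cases h : n ≤ k
    · rw [if_pos h]
      have hfac : ((k - n).factorial : ℂ) * (k.descFactorial n : ℂ) = (k.factorial : ℂ) := by
        rw [← Nat.cast_mul, Nat.factorial_mul_descFactorial h]
      have h1 : ((k - n).factorial : ℂ) ≠ 0 := Nat.cast_ne_zero.2 (Nat.factorial_ne_zero _)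
      have h2 : (k.factorial : ℂ) ≠ 0 := Nat.cast_ne_zero.2 (Nat.factorial_ne_zero _)
      field_simp
      linear_combination a ^ k * hfac
    · rw [if_neg h, Nat.descFactorial_eq_zero_iff_lt.2 (lt_of_not_ge h), Nat.cast_zero, zero_mul]
  rw [heq]
  apply (summable_nat_add_iff n).1
  have : (fun k : ℕ => (if n ≤ k + n then a ^ (k + n) / (((k + n - n).factorial : ℕ) : ℂ) else 0))
      = fun k : ℕ => a ^ n * (a ^ k / (k.factorial : ℂ)) := by
    funext k
    rw [if_pos (Nat.le_add_left n k), Nat.add_sub_cancel, pow_add, mul_comm (a ^ k), mul_div_assoc]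
  rw [this]
  exact (summable_exp_aux a).mul_left _

lemma summable_poly_aux (a : ℂ) (f : Polynomial ℂ) :
    Summable (fun k : ℕ => f.eval (k : ℂ) * (a ^ k / (k.factorial : ℂ))) := by
  suffices H : ∀ d : ℕ, ∀ f : Polynomial ℂ, f.natDegree ≤ d →
      Summable (fun k : ℕ => f.eval (k : ℂ) * (a ^ k / (k.factorial : ℂ))) from
    H f.natDegree f le_rfl
  intro d
  induction d with
  | zero =>
    intro f hf
    rw [Polynomial.eq_C_of_natDegree_le_zero hf]
    simpa using (summable_exp_aux a).mul_left (f.coeff 0)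
  | succ d ih =>
    intro f hf
    by_cases h0 : f.natDegree ≤ d
    · exact ih f h0
    set c := f.coeff (d + 1) with hc
    set g := f - C c * descPochhammer ℂ (d + 1) with hg
    have hdn : (descPochhammer ℂ (d + 1)).natDegree = d + 1 :=
      descPochhammer_natDegree (R := ℂ) _
    have hmon : (descPochhammer ℂ (d + 1)).Monic := monic_descPochhammer _ _
    have hgd : g.natDegree ≤ d := by
      apply Polynomial.natDegree_le_iff_coeff_eq_zero.2
      intro m hm
      rcases eq_or_lt_of_le (Nat.succ_le_of_lt hm) with h | h
      · have hcoeff : (descPochhammer ℂ (d + 1)).coeff (d + 1) = 1 := by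
          have := hmon.leadingCoeff
          rwa [Polynomial.leadingCoeff, hdn] at this
        simp [hg, ← h, coeff_C_mul, hcoeff, hc]
      · have h1 : f.natDegree < m := lt_of_le_of_lt hf h
        have h2 : (C c * descPochhammer ℂ (d + 1)).natDegree < m := by
          calc (C c * descPochhammer ℂ (d + 1)).natDegree ≤ d + 1 := by
                simpa [hdn] using Polynomial.natDegree_C_mul_le c (descPochhammer ℂ (d + 1))
            _ < m := h
        simp [hg, Polynomial.coeff_eq_zero_of_natDegree_lt h1,
          Polynomial.coeff_eq_zero_of_natDegree_lt h2]
    have hsum : (fun k : ℕ => f.eval (k : ℂ) * (a ^ k / (k.factorial : ℂ)))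
        = fun k : ℕ => g.eval (k : ℂ) * (a ^ k / (k.factorial : ℂ))
          + c * ((descPochhammer ℂ (d + 1)).eval (k : ℂ) * (a ^ k / (k.factorial : ℂ))) := by
      funext k
      simp [hg]
      ring
    rw [hsum]
    exact (ih g hgd).add ((summable_desc_aux a (d + 1)).mul_left c)

lemma summable_shift_aux (a : ℂ) (f : Polynomial ℂ) :
    Summable (fun k : ℕ => (k : ℂ) * f.eval ((k : ℂ) - 1) * (a ^ k / (k.factorial : ℂ))) := by
  have := summable_poly_aux a (X * f.comp (X - C 1))
  convert this using 2 with k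
  simp [eval_comp]

lemma tsum_shift_aux (a : ℂ) (f : Polynomial ℂ) :
    ∑' k : ℕ, (k : ℂ) * f.eval ((k : ℂ) - 1) * (a ^ k / (k.factorial : ℂ))
      = a * ∑' k : ℕ, f.eval (k : ℂ) * (a ^ k / (k.factorial : ℂ)) := by
  rw [Summable.tsum_eq_zero_add (summable_shift_aux a f)]
  rw [← tsum_mul_left]
  simp only [Nat.cast_zero, zero_mul, zero_add]
  congr 1
  funext k
  have hfac : (((k + 1).factorial : ℕ) : ℂ) = ((k : ℂ) + 1) * ((k.factorial : ℕ) : ℂ) := by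
    rw [Nat.factorial_succ]; push_cast; ring
  have h1 : ((k : ℂ) + 1) ≠ 0 := Nat.cast_add_one_ne_zero k
  have h2 : ((k.factorial : ℕ) : ℂ) ≠ 0 := Nat.cast_ne_zero.2 (Nat.factorial_ne_zero _)
  push_cast
  rw [hfac]
  field_simp
  ring

lemma comp_X_add_one_degree {q : Polynomial ℂ} (hq : q ≠ 0) :
    (q.comp (X + C 1)).degree = q.degree ∧ (q.comp (X + C 1)).leadingCoeff = q.leadingCoeff := by
  have hnd : (X + C 1 : Polynomial ℂ).natDegree = 1 := natDegree_X_add_C 1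
  have hlc : (q.comp (X + C 1)).leadingCoeff = q.leadingCoeff := by
    rw [leadingCoeff_comp (by rw [hnd]; norm_num), leadingCoeff_X_add_C, one_pow, mul_one]
  have hne : q.comp (X + C 1) ≠ 0 := by
    intro h
    apply hq
    have := hlc
    rw [h, leadingCoeff_zero] at this
    exact leadingCoeff_eq_zero.1 this.symm
  have hnd2 : (q.comp (X + C 1)).natDegree = q.natDegree := by
    rw [natDegree_comp, hnd, mul_one]
  exact ⟨by rw [degree_eq_natDegree hne, degree_eq_natDegree hq, hnd2], hlc⟩

/-- If `P` satisfies the Charlier orthogonality conditions for the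
multi-index `n`, then `Q(x) = x·P(x-1) - a_ℓ·P(x)` satisfies them for `n + e_ℓ`;
moreover `Q` is monic of degree `N+1` whenever `P` is monic of degree `N`. -/
theorem charlier_raising (r : ℕ) (hr : 1 ≤ r) (a : Fin r → ℂ) (ha : ∀ i, a i ≠ 0)
    (n : Fin r → ℕ) (ℓ : Fin r) (P : Polynomial ℂ)
    (horth : ∀ i : Fin r, ∀ q : Polynomial ℂ, q.degree < (n i : WithBot ℕ) →
      ∑' k : ℕ, P.eval (k : ℂ) * q.eval (k : ℂ) * (a i ^ k / (k.factorial : ℂ)) = 0) :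
    (∀ i : Fin r, ∀ q : Polynomial ℂ,
      q.degree < ((n i + if i = ℓ then 1 else 0 : ℕ) : WithBot ℕ) →
      ∑' k : ℕ, (raiseCharlier (a ℓ) P).eval (k : ℂ) * q.eval (k : ℂ) *
        (a i ^ k / (k.factorial : ℂ)) = 0) ∧
    ∀ N : ℕ, P.Monic → P.natDegree = N →
      (raiseCharlier (a ℓ) P).Monic ∧ (raiseCharlier (a ℓ) P).natDegree = N + 1 := by

  constructor
  · intro i q hq
    set f : Polynomial ℂ := P * q.comp (X + C 1) with hf
    set rpoly : Polynomial ℂ := C (a i) * q.comp (X + C 1) - C (a ℓ) * q with hrp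
    -- degree bound for rpoly
    have hdeg : rpoly.degree < (n i : WithBot ℕ) := by
      by_cases hq0 : q = 0
      · have : rpoly = 0 := by simp [hrp, hq0]
        rw [this, degree_zero]
        exact WithBot.bot_lt_coe _
      obtain ⟨hcd, hcl⟩ := comp_X_add_one_degree hq0
      by_cases hr0 : rpoly = 0
      · rw [hr0, degree_zero]; exact WithBot.bot_lt_coe _
      rw [← natDegree_lt_iff_degree_lt hr0]
      by_cases hil : i = ℓ
      · subst hil
        rw [if_pos rfl] at hq
        have hqn : q.natDegree < n i + 1 := by
          rw [natDegree_lt_iff_degree_lt hq0]; exact_mod_cast hq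
        have hqn' : q.natDegree ≤ n i := Nat.lt_succ_iff.1 hqn
        have hDne : q.comp (X + C 1) - q ≠ 0 := by
          intro h
          apply hr0
          rw [hrp, ← mul_sub, h, mul_zero]
        have hcompne : q.comp (X + C 1) ≠ 0 := by
          intro h
          rw [h, degree_zero] at hcd
          exact hq0 (degree_eq_bot.1 hcd.symm)
        have hDdeg : (q.comp (X + C 1) - q).degree < q.degree :=
          hcd ▸ degree_sub_lt hcd hcompne hcl
        have hDnat : (q.comp (X + C 1) - q).natDegree < q.natDegree := by
          rw [natDegree_lt_iff_degree_lt hDne]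
          rw [degree_eq_natDegree hq0] at hDdeg
          exact_mod_cast hDdeg
        calc rpoly.natDegree = (C (a i) * (q.comp (X + C 1) - q)).natDegree := by
              rw [hrp, mul_sub]
          _ ≤ (q.comp (X + C 1) - q).natDegree := natDegree_C_mul_le _ _
          _ < q.natDegree := hDnat
          _ ≤ n i := hqn'
      · rw [if_neg hil, add_zero] at hq
        have hqn : q.natDegree < n i := by
          rw [natDegree_lt_iff_degree_lt hq0]; exact_mod_cast hq
        have hcompnat : (q.comp (X + C 1)).natDegree = q.natDegree := by
          rw [natDegree_comp, natDegree_X_add_C, mul_one]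
        calc rpoly.natDegree
            ≤ max (C (a i) * q.comp (X + C 1)).natDegree (C (a ℓ) * q).natDegree :=
              natDegree_sub_le _ _
          _ ≤ q.natDegree := by
              apply max_le
              · exact le_trans (natDegree_C_mul_le _ _) (le_of_eq hcompnat)
              · exact natDegree_C_mul_le _ _
          _ < n i := hqn
    -- summabilities
    have hS1 : Summable (fun k : ℕ =>
        (k : ℂ) * f.eval ((k : ℂ) - 1) * (a i ^ k / (k.factorial : ℂ))) :=
      summable_shift_aux (a i) f
    have hS2 : Summable (fun k : ℕ =>
        a ℓ * ((P * q).eval (k : ℂ) * (a i ^ k / (k.factorial : ℂ)))) :=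
      (summable_poly_aux (a i) (P * q)).mul_left _
    have hS3 : Summable (fun k : ℕ =>
        a i * (f.eval (k : ℂ) * (a i ^ k / (k.factorial : ℂ)))) :=
      (summable_poly_aux (a i) f).mul_left _
    have key : ∀ k : ℕ,
        (raiseCharlier (a ℓ) P).eval (k : ℂ) * q.eval (k : ℂ) * (a i ^ k / (k.factorial : ℂ))
          = (k : ℂ) * f.eval ((k : ℂ) - 1) * (a i ^ k / (k.factorial : ℂ))
            - a ℓ * ((P * q).eval (k : ℂ) * (a i ^ k / (k.factorial : ℂ))) := by
      intro k
      simp only [raiseCharlier, hf, eval_sub, eval_mul, eval_X, eval_C, eval_comp, eval_add,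
        eval_one]
      ring
    calc ∑' k : ℕ, (raiseCharlier (a ℓ) P).eval (k : ℂ) * q.eval (k : ℂ) *
          (a i ^ k / (k.factorial : ℂ))
        = ∑' k : ℕ, ((k : ℂ) * f.eval ((k : ℂ) - 1) * (a i ^ k / (k.factorial : ℂ))
            - a ℓ * ((P * q).eval (k : ℂ) * (a i ^ k / (k.factorial : ℂ)))) :=
          tsum_congr key
      _ = (∑' k : ℕ, (k : ℂ) * f.eval ((k : ℂ) - 1) * (a i ^ k / (k.factorial : ℂ)))
            - ∑' k : ℕ, a ℓ * ((P * q).eval (k : ℂ) * (a i ^ k / (k.factorial : ℂ))) :=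
          Summable.tsum_sub hS1 hS2
      _ = a i * (∑' k : ℕ, f.eval (k : ℂ) * (a i ^ k / (k.factorial : ℂ)))
            - a ℓ * ∑' k : ℕ, (P * q).eval (k : ℂ) * (a i ^ k / (k.factorial : ℂ)) := by
          rw [tsum_shift_aux, tsum_mul_left]
      _ = ∑' k : ℕ, (a i * (f.eval (k : ℂ) * (a i ^ k / (k.factorial : ℂ)))
            - a ℓ * ((P * q).eval (k : ℂ) * (a i ^ k / (k.factorial : ℂ)))) := by
          rw [Summable.tsum_sub hS3 hS2, tsum_mul_left, tsum_mul_left]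
      _ = ∑' k : ℕ, P.eval (k : ℂ) * rpoly.eval (k : ℂ) * (a i ^ k / (k.factorial : ℂ)) := by
          apply tsum_congr
          intro k
          simp only [hf, hrp, eval_sub, eval_mul, eval_C]
          ring
      _ = 0 := horth i rpoly hdeg
  · intro N hP hN
    have hcomp : (P.comp (X - C 1)).Monic := hP.comp_X_sub_C 1
    have h1 : (X * P.comp (X - C 1)).Monic := monic_X.mul hcomp
    have hd1 : (X * P.comp (X - C 1)).natDegree = N + 1 := by
      rw [natDegree_mul X_ne_zero hcomp.ne_zero, natDegree_X, natDegree_comp,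
        natDegree_X_sub_C, mul_one, hN, add_comm]
    have hd2 : (C (a ℓ) * P).degree < (X * P.comp (X - C 1)).degree := by
      rw [degree_eq_natDegree h1.ne_zero, hd1]
      apply lt_of_le_of_lt degree_le_natDegree
      exact_mod_cast Nat.lt_succ_of_le (le_trans (natDegree_C_mul_le _ _) hN.le)
    have hlt : (C (a ℓ) * P).natDegree < (X * P.comp (X - C 1)).natDegree := by
      rw [hd1]
      exact Nat.lt_succ_of_le (le_trans (natDegree_C_mul_le _ _) hN.le)
    refine ⟨h1.sub_of_left hd2, ?_⟩
    rw [raiseCharlier, natDegree_sub_eq_left_of_natDegree_lt hlt, hd1]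
end

section
/- Let r ≥ 1, let a_0,…,a_{r−1} be complex numbers, and let n = (n_0,…,n_{r−1}) ∈ ℕ^r. With the raising operators (Φ_{a_ℓ} f)(x) = x·f(x−1) − a_ℓ·f(x) acting on functions ℂ → ℂ, the function obtained by applying Φ_{a_0} n_0 times, then Φ_{a_1} n_1 times, …, then Φ_{a_{r−1}} n_{r−1} times (in any order, composed) to the constant function 1 is, for every x ∈ ℂ, equal to C^a_n(x) = Σ_{k_0=0}^{n_0}⋯Σ_{k_{r−1}=0}^{n_{r−1}} (Π_{ℓ=0}^{r−1} binom(n_ℓ,k_ℓ)·(−a_ℓ)^{n_ℓ−k_ℓ})·(−1)^{|k|}·(−x)_{|k|}, where |k| = k_0+⋯+k_{r−1} and (y)_m = y(y+1)⋯(y+m−1) is the rising Pochhammer symbol. -/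
/-- The Charlier raising operator `(Φ_a f)(x) = x·f(x-1) - a·f(x)`. -/
def PhiOp (a : ℂ) (f : ℂ → ℂ) : ℂ → ℂ := fun x => x * f (x - 1) - a * f x

/-- The explicit type II Charlier--Angelesco polynomial (as a function of `x = z^r`). -/
noncomputable def charlierAngelesco (r : ℕ) (a : Fin r → ℂ) (n : Fin r → ℕ) (x : ℂ) : ℂ :=
  ∑ k ∈ Fintype.piFinset (fun i : Fin r => Finset.range (n i + 1)),
    (∏ ℓ : Fin r, ((n ℓ).choose (k ℓ) : ℂ) * (-(a ℓ)) ^ (n ℓ - k ℓ)) *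
      (-1) ^ (∑ i, k i) * poch (-x) (∑ i, k i)

/-! Let `T = raiseOp`, i.e. `T f (x) = x f(x - 1)`. Every `Φ_a` equals `T - a`, so all the
operators are polynomials in `T`, and the composite is `∏ ℓ, (T - a_ℓ) ^ n_ℓ`. The binomial theorem
expands this product as `∑ k, (∏ ℓ, binom(n_ℓ, k_ℓ) (-a_ℓ) ^ (n_ℓ - k_ℓ)) T ^ |k|`, and `T ^ m 1`
is the falling factorial `x (x - 1) ⋯ (x - m + 1) = (-1) ^ m (-x)_m`. -/

open Polynomial Finset

section

variable (R : Type*) [CommRing R]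

def raiseOp : Module.End R (R → R) where
  toFun f x := x * f (x - 1)
  map_add' f g := by ext x; simp [mul_add]
  map_smul' c f := by ext x; simp only [Pi.smul_apply, smul_eq_mul, RingHom.id_apply]; ring

theorem raiseOp_pow_apply_one (m : ℕ) :
    (raiseOp R ^ m) 1 = fun x => (descPochhammer R m).eval x := by
  induction m with
  | zero => ext; simp
  | succ m ih =>
    ext x
    rw [pow_succ', Module.End.mul_apply, ih, descPochhammer_succ_left]
    simp [raiseOp]

theorem aeval_raiseOp_C_mul_X_pow_apply_one (c : R) (m : ℕ) :
    aeval (raiseOp R) (C c * X ^ m) 1 = fun x => c * (descPochhammer R m).eval x := by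
  rw [map_mul, aeval_C, aeval_X_pow, Module.End.mul_apply, raiseOp_pow_apply_one,
    Module.algebraMap_end_apply]
  rfl

end

theorem phiOp_eq_aeval_raiseOp (a : ℂ) : PhiOp a = ⇑(aeval (raiseOp ℂ) (X - C a)) := by
  ext f x
  simp [PhiOp, raiseOp, Module.algebraMap_end_apply]

theorem foldr_iterate_phiOp {ι : Type*} (a : ι → ℂ) (n : ι → ℕ) (l : List ι) :
    l.foldr (fun i g => (PhiOp (a i))^[n i] ∘ g) id
      = ⇑(aeval (raiseOp ℂ) (l.map fun i => (X - C (a i)) ^ n i).prod) := by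
  induction l with
  | nil => simp only [List.foldr_nil, List.map_nil, List.prod_nil, map_one, Module.End.coe_one]
  | cons i l ih =>
    rw [List.foldr_cons, ih, List.map_cons, List.prod_cons, map_mul, map_pow,
      Module.End.coe_mul, Module.End.coe_pow, phiOp_eq_aeval_raiseOp]

theorem prod_add_pow_eq_sum_piFinset {R ι : Type*} [CommSemiring R] [Fintype ι] [DecidableEq ι]
    (x : R) (y : ι → R) (n : ι → ℕ) :
    ∏ i, (x + y i) ^ n i = ∑ k ∈ Fintype.piFinset (fun i => range (n i + 1)),
      (∏ i, ((n i).choose (k i) : R) * y i ^ (n i - k i)) * x ^ ∑ i, k i := by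
  simp_rw [add_pow, prod_univ_sum, ← prod_pow_eq_pow_sum, ← prod_mul_distrib]
  refine sum_congr rfl fun k _ => prod_congr rfl fun i _ => by ring

theorem descPochhammer_eval_eq_neg_one_pow_mul_poch (x : ℂ) (m : ℕ) :
    (descPochhammer ℂ m).eval x = (-1) ^ m * poch (-x) m := by
  rw [descPochhammer_eval_eq_prod_range, poch, ← card_range m, ← prod_const, card_range,
    ← prod_mul_distrib]
  exact prod_congr rfl fun i _ => by ring

theorem charlier_rodrigues_explicit_general (r : ℕ) (a : Fin r → ℂ)
    (n : Fin r → ℕ) (x : ℂ) :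
    ((List.finRange r).foldr (fun i g => (PhiOp (a i))^[n i] ∘ g) id) (fun _ => 1) x
      = charlierAngelesco r a n x := by
  have hprod : ∏ i, (X - C (a i)) ^ n i = ∑ k ∈ Fintype.piFinset (fun i => range (n i + 1)),
      C (∏ i, ((n i).choose (k i) : ℂ) * (-a i) ^ (n i - k i)) * X ^ ∑ i, k i := by
    simp_rw [sub_eq_add_neg, ← C_neg, prod_add_pow_eq_sum_piFinset, map_prod, map_mul, map_pow,
      map_natCast]
  rw [foldr_iterate_phiOp, ← Fin.prod_univ_def, hprod, charlierAngelesco, ← Pi.one_def]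
  simp only [map_sum, LinearMap.sum_apply, Finset.sum_apply, aeval_raiseOp_C_mul_X_pow_apply_one,
    descPochhammer_eval_eq_neg_one_pow_mul_poch, mul_assoc]

/-- Applying `Φ_{a_0}` `n_0` times, then `Φ_{a_1}` `n_1` times, …, then
`Φ_{a_{r-1}}` `n_{r-1}` times to the constant function `1` yields the explicit type II
Charlier--Angelesco polynomial `C^a_n`. -/
theorem charlier_rodrigues_explicit (r : ℕ) (hr : 1 ≤ r) (a : Fin r → ℂ)
    (n : Fin r → ℕ) (x : ℂ) :
    ((List.finRange r).foldr (fun i g => (PhiOp (a i))^[n i] ∘ g) id) (fun _ => 1) x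
      = charlierAngelesco r a n x :=
  charlier_rodrigues_explicit_general r a n x
end

section
/- Let r ≥ 1, let a_0,…,a_{r−1} be nonzero, pairwise distinct complex numbers, and let n = (n_0,…,n_{r−1}) ∈ ℕ^r. Then for every ℓ ∈ {0,…,r−1} and every j with 0 ≤ j ≤ n_ℓ−1, the series Σ_{k=0}^∞ C^a_n(k)·(−k)_j·a_ℓ^k/k! converges absolutely and its sum equals 0. -/
/-!
With `P = ∏ₜ (X - aₜ)^{nₜ}`, the identity `(-1)^m (-x)_m = x(x-1)⋯(x-m+1)` shows that `C^a_n(x)` is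
`P` read in the falling-factorial basis, and `∑ₖ k(k-1)⋯(k-m+1) aᵏ/k! = aᵐ eᵃ` turns the series
attached to any polynomial `Q` into `Q(a) eᵃ`. Multiplication by `x` on the falling-factorial side is
`Q ↦ X (Q + Q')` (the operator `x d/dx` acting on `Q eˣ`), which lowers the order of vanishing at `a`
by at most one. So for `j < n_ℓ` the summand `C^a_n(k) (-k)_j` comes from a polynomial that still
vanishes at `a_ℓ`, and the series sums to `0`; absolute convergence is automatic in `ℂ`.
-/

open Polynomial

section FallingEval

variable {R : Type*} [CommRing R]

/-- `∑ cₘ Xᵐ ↦ ∑ cₘ x(x-1)⋯(x-m+1)`. -/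
noncomputable def fallingEval (x : R) : R[X] →ₗ[R] R :=
  lsum fun m => (descPochhammer R m).eval x • LinearMap.id

@[simp]
theorem fallingEval_monomial (x c : R) (m : ℕ) :
    fallingEval x (monomial m c) = c * (descPochhammer R m).eval x := by
  simp [fallingEval, mul_comm]

theorem fallingEval_X_mul_add_derivative (x : R) (P : R[X]) :
    fallingEval x (X * (P + derivative P)) = x * fallingEval x P := by
  induction P using Polynomial.induction_on' with
  | add P Q hP hQ =>
    rw [derivative_add, add_add_add_comm, mul_add, map_add, hP, hQ, map_add, mul_add]
  | monomial m c =>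
    rw [derivative_monomial, mul_add, X_mul_monomial, X_mul_monomial, map_add,
      fallingEval_monomial, fallingEval_monomial, fallingEval_monomial]
    cases m with
    | zero => simp [mul_comm]
    | succ m =>
      rw [descPochhammer_succ_eval, Nat.add_sub_cancel]
      push_cast
      ring

end FallingEval

theorem pow_dvd_X_mul_add_derivative {R : Type*} [CommRing R] {p q : R[X]} {s : ℕ}
    (h : q ^ (s + 1) ∣ p) : q ^ s ∣ X * (p + derivative p) :=
  ((pow_dvd_pow q s.le_succ |>.trans h).add
    (by simpa using pow_sub_one_dvd_derivative_of_pow_dvd h)).mul_left X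

theorem poch_succ (y : ℂ) (m : ℕ) : poch y (m + 1) = poch y m * (y + m) :=
  Finset.prod_range_succ _ _

theorem poch_neg (x : ℂ) (m : ℕ) : poch (-x) m = (-1) ^ m * (descPochhammer ℂ m).eval x := by
  induction m with
  | zero => simp [poch]
  | succ m ih =>
    rw [poch_succ, ih, descPochhammer_succ_eval]
    ring

theorem exists_fallingEval_eq_poch_mul {a : ℂ} {P : ℂ[X]} {s j : ℕ}
    (hP : (X - C a) ^ (s + j) ∣ P) :
    ∃ Q : ℂ[X], (X - C a) ^ s ∣ Q ∧ ∀ x, fallingEval x Q = poch (-x) j * fallingEval x P := by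
  induction j generalizing s with
  | zero => exact ⟨P, hP, fun x => by simp [poch]⟩
  | succ j ih =>
    obtain ⟨Q, hQ, hQP⟩ := ih (s := s + 1) (by rwa [add_right_comm, add_assoc])
    refine ⟨C (j : ℂ) * Q - X * (Q + derivative Q),
      dvd_sub (dvd_mul_of_dvd_right (pow_dvd_pow _ s.le_succ |>.trans hQ) _)
        (pow_dvd_X_mul_add_derivative hQ), fun x => ?_⟩
    rw [map_sub, ← smul_eq_C_mul, map_smul, fallingEval_X_mul_add_derivative, hQP, poch_succ,
      smul_eq_mul]
    ring

section ExpSeries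

open Nat

variable {𝕜 : Type*} [RCLike 𝕜]

theorem hasSum_descFactorial_mul_pow_div_factorial (a : 𝕜) (m : ℕ) :
    HasSum (fun k : ℕ => (k.descFactorial m : 𝕜) * (a ^ k / k !)) (a ^ m * NormedSpace.exp a) := by
  rw [← hasSum_nat_add_iff' m, Finset.sum_eq_zero fun k hk => by
    rw [Nat.descFactorial_eq_zero_iff_lt.mpr (Finset.mem_range.mp hk), Nat.cast_zero, zero_mul],
    sub_zero]
  refine ((NormedSpace.expSeries_div_hasSum_exp a).mul_left (a ^ m)).congr_fun fun t => ?_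
  have hfact : ((t + m) ! : 𝕜) = t ! * (t + m).descFactorial m := by
    have h := Nat.factorial_mul_descFactorial (Nat.le_add_left m t)
    rw [Nat.add_sub_cancel] at h
    exact_mod_cast h.symm
  have hdesc : ((t + m).descFactorial m : 𝕜) ≠ 0 := by
    rw [Nat.cast_ne_zero, ← Nat.pos_iff_ne_zero]
    exact Nat.descFactorial_pos.mpr (Nat.le_add_left m t)
  rw [hfact, pow_add]
  field_simp

theorem hasSum_fallingEval_mul_pow_div_factorial (a : 𝕜) (P : 𝕜[X]) :
    HasSum (fun k : ℕ => fallingEval (k : 𝕜) P * (a ^ k / k !)) (P.eval a * NormedSpace.exp a) := by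
  induction P using Polynomial.induction_on' with
  | add P Q hP hQ => simpa only [map_add, eval_add, add_mul] using hP.add hQ
  | monomial m c =>
    simpa only [fallingEval_monomial, descPochhammer_eval_eq_descFactorial, eval_monomial,
      mul_assoc] using (hasSum_descFactorial_mul_pow_div_factorial a m).mul_left c

end ExpSeries

theorem X_sub_C_pow_eq_sum {R : Type*} [CommRing R] (a : R) (n : ℕ) :
    (X - C a) ^ n = ∑ k ∈ Finset.range (n + 1), C ((n.choose k : R) * (-a) ^ (n - k)) * X ^ k := by
  rw [sub_eq_add_neg, ← C_neg, add_pow]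
  refine Finset.sum_congr rfl fun k _ => ?_
  rw [C_mul, C_pow, ← C_eq_natCast]
  ring

theorem charlierAngelesco_eq_fallingEval (r : ℕ) (a : Fin r → ℂ) (n : Fin r → ℕ) (x : ℂ) :
    charlierAngelesco r a n x = fallingEval x (∏ t, (X - C (a t)) ^ n t) := by
  simp_rw [X_sub_C_pow_eq_sum, Finset.prod_univ_sum, Finset.prod_mul_distrib, ← map_prod,
    Finset.prod_pow_eq_pow_sum, map_sum, C_mul_X_pow_eq_monomial, fallingEval_monomial]
  refine Finset.sum_congr rfl fun K _ => ?_
  have hsign : ((-1 : ℂ) ^ ∑ t, K t) * (-1) ^ ∑ t, K t = 1 := by rw [← mul_pow]; norm_num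
  rw [poch_neg, mul_assoc, ← mul_assoc ((-1) ^ _), hsign, one_mul]

theorem charlier_angelesco_orthogonality_general (r : ℕ) (a : Fin r → ℂ)
    (n : Fin r → ℕ) (ℓ : Fin r) (j : ℕ) (hj : j < n ℓ) :
    Summable (fun k : ℕ => ‖
      (charlierAngelesco r a n (k : ℂ) * poch (-(k : ℂ)) j *
        (a ℓ ^ k / (k.factorial : ℂ)))‖) ∧
    ∑' k : ℕ, charlierAngelesco r a n (k : ℂ) * poch (-(k : ℂ)) j *
      (a ℓ ^ k / (k.factorial : ℂ)) = 0 := by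
  have hdvd : (X - C (a ℓ)) ^ (n ℓ - j + j) ∣ ∏ t, (X - C (a t)) ^ n t := by
    rw [Nat.sub_add_cancel hj.le]
    exact Finset.dvd_prod_of_mem _ (Finset.mem_univ ℓ)
  obtain ⟨Q, hQdvd, hQ⟩ := exists_fallingEval_eq_poch_mul hdvd
  have hroot : Q.eval (a ℓ) = 0 :=
    dvd_iff_isRoot.mp ((dvd_pow_self _ (Nat.sub_ne_zero_of_lt hj)).trans hQdvd)
  have hsum : HasSum (fun k : ℕ =>
      charlierAngelesco r a n k * poch (-(k : ℂ)) j * (a ℓ ^ k / k.factorial)) 0 := by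
    simpa only [hQ, hroot, zero_mul, charlierAngelesco_eq_fallingEval, mul_comm (poch _ _)] using
      hasSum_fallingEval_mul_pow_div_factorial (a ℓ) Q
  exact ⟨summable_norm_iff.mpr hsum.summable, hsum.tsum_eq⟩

/-- For nonzero pairwise distinct parameters `a_0, …, a_{r-1}`, the type II
Charlier--Angelesco polynomial satisfies the orthogonality relations
`∑_{k=0}^∞ C^a_n(k) (-k)_j a_ℓ^k / k! = 0` for `0 ≤ j ≤ n_ℓ - 1`, the series converging
absolutely. -/
theorem charlier_angelesco_orthogonality (r : ℕ) (hr : 1 ≤ r) (a : Fin r → ℂ)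
    (ha : ∀ i, a i ≠ 0) (hdist : ∀ i j : Fin r, i ≠ j → a i ≠ a j)
    (n : Fin r → ℕ) (ℓ : Fin r) (j : ℕ) (hj : j < n ℓ) :
    Summable (fun k : ℕ => ‖
      (charlierAngelesco r a n (k : ℂ) * poch (-(k : ℂ)) j *
        (a ℓ ^ k / (k.factorial : ℂ)))‖) ∧
    ∑' k : ℕ, charlierAngelesco r a n (k : ℂ) * poch (-(k : ℂ)) j *
      (a ℓ ^ k / (k.factorial : ℂ)) = 0 :=
  charlier_angelesco_orthogonality_general r a n ℓ j hj
end

section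
/- Let r ≥ 1, let a_0,…,a_{r−1} be complex numbers, and let n = (n_0,…,n_{r−1}) ∈ ℕ^r. Then the polynomial C^a_n is monic of degree |n|, its coefficient of x^{|n|−1} equals −binom(|n|,2) − Σ_{j=0}^{r−1} a_j·n_j (when |n| ≥ 1), and its value at 0 is C^a_n(0) = Π_{ℓ=0}^{r−1} (−a_ℓ)^{n_ℓ}. -/
open Polynomial

/-- The polynomial rising Pochhammer symbol `(p)_m = p(p+1)⋯(p+m-1)`. -/
noncomputable def pochP (p : Polynomial ℂ) (m : ℕ) : Polynomial ℂ :=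
  ∏ i ∈ Finset.range m, (p + Polynomial.C (i : ℂ))

/-- The type II Charlier--Angelesco polynomial (in the variable `x = z^r`). -/
noncomputable def charlierAngelescoP (r : ℕ) (a : Fin r → ℂ) (n : Fin r → ℕ) :
    Polynomial ℂ :=
  ∑ k ∈ Fintype.piFinset (fun i : Fin r => Finset.range (n i + 1)),
    Polynomial.C ((∏ ℓ : Fin r, ((n ℓ).choose (k ℓ) : ℂ) * (-(a ℓ)) ^ (n ℓ - k ℓ)) *
        (-1) ^ (∑ i, k i)) *
      pochP (-X) (∑ i, k i)

/-- The falling factorial polynomial `x(x-1)⋯(x-m+1)`. -/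
noncomputable def fallP (m : ℕ) : Polynomial ℂ :=
  ∏ i ∈ Finset.range m, (X - Polynomial.C (i : ℂ))

lemma fallP_monic (m : ℕ) : (fallP m).Monic :=
  monic_prod_of_monic _ _ fun i _ => monic_X_sub_C _

lemma fallP_natDegree (m : ℕ) : (fallP m).natDegree = m := by
  rw [fallP, natDegree_prod_of_monic _ _ fun i _ => monic_X_sub_C _]
  simp only [natDegree_X_sub_C, Finset.sum_const, Finset.card_range, smul_eq_mul, mul_one]

lemma fallP_degree (m : ℕ) : (fallP m).degree = m := by
  rw [degree_eq_natDegree (fallP_monic m).ne_zero, fallP_natDegree]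

lemma fallP_nextCoeff (m : ℕ) : (fallP m).nextCoeff = -((m.choose 2 : ℕ) : ℂ) := by
  rw [fallP, prod_X_sub_C_nextCoeff]
  congr 1
  have : ∑ i ∈ Finset.range m, ((i : ℂ)) = ((∑ i ∈ Finset.range m, i : ℕ) : ℂ) := by
    push_cast; ring
  rw [this, Finset.sum_range_id, Nat.choose_two_right]

lemma fallP_eval_zero (m : ℕ) (hm : 1 ≤ m) : (fallP m).eval 0 = 0 := by
  rw [fallP, eval_prod]
  apply Finset.prod_eq_zero (Finset.mem_range.2 hm)
  simp

lemma pochP_neg_X (m : ℕ) : pochP (-X) m = (-1) ^ m * fallP m := by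
  rw [pochP, fallP]
  rw [show ((-1 : Polynomial ℂ)) ^ m = ∏ _i ∈ Finset.range m, (-1 : Polynomial ℂ) by
    rw [Finset.prod_const, Finset.card_range]]
  rw [← Finset.prod_mul_distrib]
  exact Finset.prod_congr rfl fun i _ => by ring

lemma CA_eq (r : ℕ) (a : Fin r → ℂ) (n : Fin r → ℕ) :
    charlierAngelescoP r a n =
      ∑ k ∈ Fintype.piFinset (fun i : Fin r => Finset.range (n i + 1)),
        Polynomial.C (∏ ℓ : Fin r, ((n ℓ).choose (k ℓ) : ℂ) * (-(a ℓ)) ^ (n ℓ - k ℓ)) *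
          fallP (∑ i, k i) := by
  unfold charlierAngelescoP
  refine Finset.sum_congr rfl fun k _ => ?_
  rw [pochP_neg_X, map_mul, map_pow, map_neg, map_one]
  rw [mul_assoc, ← mul_assoc ((-1 : Polynomial ℂ) ^ (∑ i, k i)), ← mul_pow]
  simp

/-- The Charlier--Angelesco polynomial `C^a_n` is monic of degree `|n|`,
its coefficient of `x^{|n|-1}` is `-binom(|n|,2) - ∑_j a_j n_j` (when `|n| ≥ 1`), and
`C^a_n(0) = ∏_ℓ (-a_ℓ)^{n_ℓ}`. -/
theorem charlier_angelesco_coeffs (r : ℕ) (hr : 1 ≤ r) (a : Fin r → ℂ)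
    (n : Fin r → ℕ) :
    (charlierAngelescoP r a n).Monic ∧
    (charlierAngelescoP r a n).natDegree = ∑ i, n i ∧
    (1 ≤ ∑ i, n i →
      (charlierAngelescoP r a n).coeff ((∑ i, n i) - 1)
        = -(((∑ i, n i).choose 2 : ℕ) : ℂ) - ∑ j : Fin r, a j * (n j : ℂ)) ∧
    (charlierAngelescoP r a n).eval 0 = ∏ ℓ : Fin r, (-(a ℓ)) ^ (n ℓ) := by
  classical
  set N := ∑ i, n i with hN
  set S := Fintype.piFinset (fun i : Fin r => Finset.range (n i + 1)) with hS
  set c : (Fin r → ℕ) → ℂ :=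
    fun k => ∏ ℓ : Fin r, ((n ℓ).choose (k ℓ) : ℂ) * (-(a ℓ)) ^ (n ℓ - k ℓ) with hc
  have hmemS : ∀ k, k ∈ S ↔ ∀ i, k i ≤ n i := by
    intro k
    rw [hS, Fintype.mem_piFinset]
    simp [Nat.lt_succ_iff]
  have hnS : n ∈ S := (hmemS n).2 fun i => le_rfl
  have hcn : c n = 1 := by simp [hc]
  have hlt : ∀ k ∈ S, k ≠ n → ∑ i, k i < N := by
    intro k hk hkn
    have h1 : ∀ i, k i ≤ n i := (hmemS k).1 hk
    have h2 : ∃ i, k i ≠ n i := by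
      by_contra h
      push_neg at h
      exact hkn (funext h)
    obtain ⟨i, hi⟩ := h2
    exact Finset.sum_lt_sum (fun i _ => h1 i)
      ⟨i, Finset.mem_univ i, lt_of_le_of_ne (h1 i) hi⟩
  have hCA : charlierAngelescoP r a n = fallP N + ∑ k ∈ S.erase n, C (c k) * fallP (∑ i, k i) := by
    have h0 : charlierAngelescoP r a n = ∑ k ∈ S, C (c k) * fallP (∑ i, k i) := CA_eq r a n
    rw [h0, ← Finset.add_sum_erase S _ hnS, hcn, map_one, one_mul]
  set Q := ∑ k ∈ S.erase n, C (c k) * fallP (∑ i, k i) with hQ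
  have hQdeg : Q.degree < (N : WithBot ℕ) := by
    refine lt_of_le_of_lt (Polynomial.degree_sum_le _ _) ?_
    rw [Finset.sup_lt_iff (by exact WithBot.bot_lt_coe N)]
    intro k hk
    have hk' : ∑ i, k i < N := hlt k (Finset.mem_of_mem_erase hk) (Finset.ne_of_mem_erase hk)
    calc (C (c k) * fallP (∑ i, k i)).degree
        ≤ (C (c k)).degree + (fallP (∑ i, k i)).degree := degree_mul_le _ _
      _ ≤ 0 + ((∑ i, k i : ℕ) : WithBot ℕ) := add_le_add degree_C_le (fallP_degree _).le
      _ = ((∑ i, k i : ℕ) : WithBot ℕ) := zero_add _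
      _ < (N : WithBot ℕ) := by exact_mod_cast hk'
  have hQdeg' : Q.degree < (fallP N).degree := by rw [fallP_degree]; exact hQdeg
  have hmonic : (charlierAngelescoP r a n).Monic := by
    rw [hCA]
    exact (fallP_monic N).add_of_left hQdeg'
  have hdeg : (charlierAngelescoP r a n).degree = (N : WithBot ℕ) := by
    rw [hCA, degree_add_eq_left_of_degree_lt hQdeg', fallP_degree]
  have hnatDeg : (charlierAngelescoP r a n).natDegree = N :=
    natDegree_eq_of_degree_eq_some hdeg
  refine ⟨hmonic, hnatDeg, ?_, ?_⟩
  · -- the subleading coefficient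
    intro h1N
    have hfall : (fallP N).coeff (N - 1) = -((N.choose 2 : ℕ) : ℂ) := by
      have := Polynomial.nextCoeff_of_natDegree_pos
        (p := fallP N) (by rw [fallP_natDegree]; omega)
      rw [fallP_natDegree] at this
      rw [← this, fallP_nextCoeff]
    have hQcoeff : Q.coeff (N - 1) = -∑ j : Fin r, a j * (n j : ℂ) := by
      rw [hQ, Polynomial.finset_sum_coeff]
      have hstep : ∑ k ∈ S.erase n, (C (c k) * fallP (∑ i, k i)).coeff (N - 1)
          = ∑ k ∈ (S.erase n).filter (fun k => ∑ i, k i = N - 1),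
              (C (c k) * fallP (∑ i, k i)).coeff (N - 1) := by
        refine (Finset.sum_filter_of_ne ?_).symm
        intro k hk hne
        by_contra hsum
        have hk' : ∑ i, k i < N := hlt k (Finset.mem_of_mem_erase hk) (Finset.ne_of_mem_erase hk)
        have : (C (c k) * fallP (∑ i, k i)).natDegree < N - 1 := by
          refine lt_of_le_of_lt (natDegree_mul_le) ?_
          rw [natDegree_C, fallP_natDegree, zero_add]
          omega
        exact hne (coeff_eq_zero_of_natDegree_lt this)
      rw [hstep]
      have hterm : ∀ k ∈ (S.erase n).filter (fun k => ∑ i, k i = N - 1),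
          (C (c k) * fallP (∑ i, k i)).coeff (N - 1) = c k := by
        intro k hk
        have hsum : ∑ i, k i = N - 1 := (Finset.mem_filter.1 hk).2
        rw [hsum, coeff_C_mul]
        have : (fallP (N - 1)).coeff (N - 1) = 1 := by
          have := (fallP_monic (N - 1)).coeff_natDegree
          rwa [fallP_natDegree] at this
        rw [this, mul_one]
      rw [Finset.sum_congr rfl hterm]
      -- now a bijection with `{j | 1 ≤ n j}`
      have hinj : ∀ j ∈ Finset.univ.filter (fun j : Fin r => 1 ≤ n j),
          ∀ j' ∈ Finset.univ.filter (fun j : Fin r => 1 ≤ n j),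
          Function.update n j (n j - 1) = Function.update n j' (n j' - 1) → j = j' := by
        intro j hj j' _ heq
        by_contra hne
        have h1 : 1 ≤ n j := (Finset.mem_filter.1 hj).2
        have h2 : Function.update n j (n j - 1) j = Function.update n j' (n j' - 1) j :=
          congrFun heq j
        rw [Function.update_self, Function.update_of_ne hne] at h2
        omega
      have hT : (S.erase n).filter (fun k => ∑ i, k i = N - 1)
          = (Finset.univ.filter (fun j : Fin r => 1 ≤ n j)).image
              (fun j => Function.update n j (n j - 1)) := by
        ext k
        simp only [Finset.mem_image, Finset.mem_filter, Finset.mem_univ, true_and]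
        constructor
        · rintro ⟨hk1, hsum⟩
          have hle : ∀ i, k i ≤ n i := (hmemS k).1 (Finset.mem_of_mem_erase hk1)
          have hklt : ∑ i, k i < N := hlt k (Finset.mem_of_mem_erase hk1)
            (Finset.ne_of_mem_erase hk1)
          have hd : ∑ i, (n i - k i) = 1 := by
            have hsplit : ∑ i, (k i + (n i - k i)) = N := by
              rw [hN]
              exact Finset.sum_congr rfl fun i _ => by have := hle i; omega
            rw [Finset.sum_add_distrib] at hsplit
            omega
          have hex : ∃ j, n j - k j ≠ 0 := by
            by_contra h
            push_neg at h
            rw [Finset.sum_eq_zero (fun i _ => h i)] at hd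
            omega
          obtain ⟨j, hj⟩ := hex
          have hdj : n j - k j = 1 := by
            have h1 : n j - k j ≤ ∑ i, (n i - k i) :=
              Finset.single_le_sum (f := fun i => n i - k i)
                (fun i _ => Nat.zero_le _) (Finset.mem_univ j)
            omega
          have hrest : ∀ i, i ≠ j → n i - k i = 0 := by
            intro i hij
            have hsplit : ∑ i, (n i - k i)
                = (n j - k j) + ∑ i ∈ Finset.univ.erase j, (n i - k i) :=
              (Finset.add_sum_erase _ _ (Finset.mem_univ j)).symm
            have hzero : ∑ i ∈ Finset.univ.erase j, (n i - k i) = 0 := by omega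
            exact (Finset.sum_eq_zero_iff).1 hzero i
              (Finset.mem_erase.2 ⟨hij, Finset.mem_univ i⟩)
          refine ⟨j, by omega, ?_⟩
          funext i
          by_cases hij : i = j
          · subst hij
            rw [Function.update_self]
            have := hle i
            omega
          · rw [Function.update_of_ne hij]
            have := hle i
            have := hrest i hij
            omega
        · rintro ⟨j, hj1, rfl⟩
          have hs : ∑ i, Function.update n j (n j - 1) i = N - 1 := by
            rw [Finset.sum_update_of_mem (Finset.mem_univ j)]
            have hNsplit := Finset.sum_eq_sum_sdiff_singleton_add (Finset.mem_univ j) n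
            rw [hN]
            omega
          refine ⟨Finset.mem_erase.2 ⟨?_, ?_⟩, hs⟩
          · intro heq
            have h2 := congrFun heq j
            rw [Function.update_self] at h2
            omega
          · refine (hmemS _).2 fun i => ?_
            by_cases hij : i = j
            · subst hij; rw [Function.update_self]; omega
            · rw [Function.update_of_ne hij]
      have hval : ∀ j, 1 ≤ n j → c (Function.update n j (n j - 1)) = -(a j * (n j : ℂ)) := by
        intro j hj1
        simp only [hc]
        rw [Fintype.prod_eq_single j (fun ℓ hℓ => by
          rw [Function.update_of_ne hℓ]
          simp)]
        rw [Function.update_self]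
        have h1 : (n j).choose (n j - 1) = n j := by
          rw [← Nat.choose_symm (Nat.sub_le (n j) 1), Nat.sub_sub_self hj1,
            Nat.choose_one_right]
        have h2 : n j - (n j - 1) = 1 := by omega
        rw [h1, h2, pow_one]
        ring
      have hbij : ∑ k ∈ (S.erase n).filter (fun k => ∑ i, k i = N - 1), c k
          = ∑ j ∈ Finset.univ.filter (fun j : Fin r => 1 ≤ n j), -(a j * (n j : ℂ)) := by
        rw [hT, Finset.sum_image hinj]
        exact Finset.sum_congr rfl fun j hj => hval j (Finset.mem_filter.1 hj).2
      rw [hbij]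
      have hsub : ∑ j ∈ Finset.univ.filter (fun j : Fin r => 1 ≤ n j), -(a j * (n j : ℂ))
          = ∑ j : Fin r, -(a j * (n j : ℂ)) := by
        refine Finset.sum_subset (Finset.filter_subset _ _) ?_
        intro j _ hj
        simp only [Finset.mem_filter, Finset.mem_univ, true_and, not_le] at hj
        have : n j = 0 := by omega
        simp [this]
      rw [hsub, Finset.sum_neg_distrib]
    rw [hCA, Polynomial.coeff_add, hfall, hQcoeff]
    ring
  · -- evaluation at 0
    rw [CA_eq]
    rw [Polynomial.eval_finset_sum]
    have h0S : (0 : Fin r → ℕ) ∈ S := (hmemS 0).2 fun i => Nat.zero_le _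
    rw [Finset.sum_eq_single_of_mem (0 : Fin r → ℕ) h0S]
    · simp [fallP, eval_prod]
    · intro k hk hkne
      have : (1 : ℕ) ≤ ∑ i, k i := by
        rcases Nat.eq_zero_or_pos (∑ i, k i) with h | h
        · exfalso
          apply hkne
          funext i
          exact (Finset.sum_eq_zero_iff).1 h i (Finset.mem_univ i)
        · exact h
      rw [eval_mul, fallP_eval_zero _ this, mul_zero]
end

section
/- Let r ≥ 1, let β ∈ ℂ be such that neither β nor β−1 is a nonpositive integer, let c_0,…,c_{r−1} be complex numbers with 0 < |c_i| < 1 for all i, let n = (n_0,…,n_{r−1}) ∈ ℕ^r, and fix ℓ ∈ {0,…,r−1}. Suppose P ∈ ℂ[X] satisfies the Meixner orthogonality conditions for (β, n): Σ_{k=0}^∞ P(k)·q(k)·Γ(k+β)·c_i^k/k! = 0 for every i ∈ {0,…,r−1} and every polynomial q with deg q ≤ n_i−1. Define Q(x) := (c_ℓ/(c_ℓ−1))·((x+β−1)·P(x) − (x/c_ℓ)·P(x−1)). Then Q satisfies the Meixner orthogonality conditions for (β−1, n+e_ℓ), namely Σ_{k=0}^∞ Q(k)·q(k)·Γ(k+β−1)·c_i^k/k!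 = 0 for every i and every polynomial q with deg q ≤ n_i−1 when i ≠ ℓ, and with deg q ≤ n_ℓ when i = ℓ. Moreover, if P is monic of degree N, then Q is monic of degree N+1. -/
/-!
The weight `w_β(k) = Γ(k + β) d^k / k!` satisfies `w_β(k) = (k + β - 1) w_{β-1}(k)` and
`(k + 1) w_{β-1}(k + 1) = d w_β(k)`. Summing `Ψ P · q` against `w_{β-1}` and shifting
`k ↦ k + 1` in the term carrying `P(k - 1)` therefore moves the operator onto `q`:
`∑ (Ψ P) q w_{β-1} = c/(c-1) ∑ P (q - (d/c) q(· + 1)) w_β`.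
The polynomial `q - (d/c) q(· + 1)` has degree at most `deg q`, and for `d = c` it is a
difference, of degree `< deg q`; so the orthogonality of `P` makes the sum vanish. Every series
converges absolutely because `Γ(k + β)/k!` grows only polynomially in `k` and `|d| < 1`.
The leading coefficient of `Ψ P` is `c/(c-1) · (1 - 1/c) = 1` times that of `P`.
-/

open Polynomial

/-- The Meixner raising operator on polynomials:
`(Ψ^β_c P)(x) = (c/(c-1))·((x+β-1)·P(x) - (x/c)·P(x-1))`. -/
noncomputable def raiseMeixner (c β : ℂ) (P : Polynomial ℂ) : Polynomial ℂ :=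
  Polynomial.C (c / (c - 1)) *
    ((X + Polynomial.C (β - 1)) * P - Polynomial.C c⁻¹ * (X * P.comp (X - Polynomial.C 1)))

lemma add_mul_add_one_pow_le {x : ℝ} (hx : 0 ≤ x) (M : ℕ) :
    (x + M) * (x + 1) ^ M ≤ (x + 1) * (x + 2) ^ M := by
  have hx1 : 0 < x + 1 := by linarith
  have hbernoulli := one_add_mul_le_pow (a := (x + 1)⁻¹) (by linarith [inv_pos.2 hx1]) M
  have hsplit : (x + 2) ^ M = (x + 1) ^ M * (1 + (x + 1)⁻¹) ^ M := by
    rw [← mul_pow]; congr 1; field_simp; ring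
  rw [hsplit]
  have hpow : 0 ≤ (x + 1) ^ M := by positivity
  calc (x + M) * (x + 1) ^ M ≤ (x + 1) * (x + 1) ^ M * (1 + M * (x + 1)⁻¹) := by
        field_simp; nlinarith
    _ ≤ (x + 1) * ((x + 1) ^ M * (1 + (x + 1)⁻¹) ^ M) := by
        rw [← mul_assoc]; gcongr

/-- `Γ(s + 1) = s Γ(s)` fails only at `s = 0`, because of the junk value `Γ 0 = 0`; the factor
`max ‖Γ β‖ 1 ≥ 1` absorbs that case. -/
lemma norm_Gamma_natCast_add_le (β : ℂ) {M : ℕ} (hM : ‖β‖ ≤ M) (k : ℕ) :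
    ‖Complex.Gamma (k + β)‖ ≤
      max ‖Complex.Gamma β‖ 1 * k.factorial * ((k : ℝ) + 1) ^ M := by
  set A := max ‖Complex.Gamma β‖ 1
  have hA : 1 ≤ A := le_max_right _ _
  induction k with
  | zero => simp [A]
  | succ k ih =>
    rw [show ((k + 1 : ℕ) : ℂ) + β = (k + β) + 1 by push_cast; ring]
    by_cases h0 : (k : ℂ) + β = 0
    · rw [h0, zero_add, Complex.Gamma_one, norm_one]
      have hfact : (1 : ℝ) ≤ (k + 1).factorial := by exact_mod_cast (k + 1).factorial_pos
      have hpow : (1 : ℝ) ≤ (((k + 1 : ℕ) : ℝ) + 1) ^ M :=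
        one_le_pow₀ (by linarith [k.cast_nonneg (α := ℝ)])
      exact one_le_mul_of_one_le_of_one_le (one_le_mul_of_one_le_of_one_le hA hfact) hpow
    · have hnorm : ‖(k : ℂ) + β‖ ≤ k + M :=
        (norm_add_le _ _).trans (by rw [Complex.norm_natCast]; linarith)
      rw [Complex.Gamma_add_one _ h0, norm_mul]
      calc ‖(k : ℂ) + β‖ * ‖Complex.Gamma (k + β)‖
          ≤ (k + M) * (A * k.factorial * ((k : ℝ) + 1) ^ M) :=
            mul_le_mul hnorm ih (norm_nonneg _) (by positivity)
        _ = A * k.factorial * ((k + M) * ((k : ℝ) + 1) ^ M) := by ring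
        _ ≤ A * k.factorial * ((k + 1) * ((k : ℝ) + 2) ^ M) := by
            gcongr ?_ * ?_
            exact add_mul_add_one_pow_le k.cast_nonneg M
        _ = A * (k + 1).factorial * (((k + 1 : ℕ) : ℝ) + 1) ^ M := by
            push_cast [Nat.factorial_succ]; ring

lemma summable_eval_mul_pow {R : Type*} [NormedRing R] [HasSummableGeomSeries R] (S : R[X])
    {z : R} (hz : ‖z‖ < 1) : Summable fun k : ℕ => S.eval (k : R) * z ^ k := by
  simp_rw [eval_eq_sum_range, Finset.sum_mul, mul_assoc]
  exact summable_sum fun i _ => (summable_pow_mul_geometric_of_norm_lt_one i hz).mul_left _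

section Shift

variable {R : Type*} [Ring R] [IsDomain R]

lemma degree_comp_X_add_C (q : R[X]) (a : R) : (q.comp (X + C a)).degree = q.degree := by
  rw [degree_comp (by rw [degree_X_add_C]; exact zero_lt_one), degree_X_add_C, mul_one]

lemma leadingCoeff_comp_X_add_C (q : R[X]) (a : R) :
    (q.comp (X + C a)).leadingCoeff = q.leadingCoeff := by
  rw [leadingCoeff_comp (by rw [natDegree_X_add_C]; exact one_ne_zero), leadingCoeff_X_add_C,
    one_pow, mul_one]

lemma degree_sub_C_mul_comp_X_add_C_le (q : R[X]) (a b : R) :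
    (q - C a * q.comp (X + C b)).degree ≤ q.degree := by
  refine (degree_sub_le _ _).trans (max_le le_rfl ?_)
  rw [C_mul']
  exact (degree_smul_le _ _).trans (degree_comp_X_add_C q b).le

lemma degree_sub_comp_X_add_C_lt {q : R[X]} {n : ℕ} (hq : q.degree < ↑(n + 1)) (a : R) :
    (q - q.comp (X + C a)).degree < n := by
  rcases eq_or_ne q 0 with rfl | hq0
  · simp
  · exact (degree_sub_lt_left (degree_comp_X_add_C q a).symm hq0
      (leadingCoeff_comp_X_add_C q a).symm).trans_le (Order.le_of_lt_succ hq)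

end Shift

noncomputable def meixnerWeight (β c : ℂ) (k : ℕ) : ℂ :=
  Complex.Gamma (k + β) * c ^ k / k.factorial

lemma summable_eval_mul_meixnerWeight (R : ℂ[X]) (β : ℂ) {c : ℂ} (hc : ‖c‖ < 1) :
    Summable fun k : ℕ => R.eval (k : ℂ) * meixnerWeight β c k := by
  obtain ⟨M, hM⟩ : ∃ M : ℕ, ‖β‖ ≤ M := ⟨_, Nat.le_ceil _⟩
  set A := max ‖Complex.Gamma β‖ 1
  have hbound (k : ℕ) : ‖R.eval (k : ℂ) * meixnerWeight β c k‖ ≤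
      A * ‖(R * (X + 1) ^ M).eval (k : ℂ) * c ^ k‖ := by
    have hk : (0 : ℝ) < k.factorial := by exact_mod_cast k.factorial_pos
    have hnorm : ‖(k : ℂ) + 1‖ = k + 1 := by exact_mod_cast Complex.norm_natCast (k + 1)
    calc ‖R.eval (k : ℂ) * meixnerWeight β c k‖
        = ‖R.eval (k : ℂ)‖ * ‖Complex.Gamma (k + β)‖ * ‖c‖ ^ k / k.factorial := by
          simp [meixnerWeight, mul_assoc, mul_div_assoc]
      _ ≤ ‖R.eval (k : ℂ)‖ * (A * k.factorial * ((k : ℝ) + 1) ^ M) * ‖c‖ ^ k /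
            k.factorial := by
          gcongr; exact norm_Gamma_natCast_add_le β hM k
      _ = _ := by
          simp only [eval_mul, eval_pow, eval_add, eval_X, eval_one, norm_mul, norm_pow, hnorm]
          field_simp
  exact .of_norm_bounded ((summable_eval_mul_pow _ hc).norm.mul_left A) hbound

lemma meixnerWeight_eq_mul_meixnerWeight_sub_one {β : ℂ} (c : ℂ) {k : ℕ}
    (h : (k : ℂ) + β - 1 ≠ 0) :
    meixnerWeight β c k = (k + β - 1) * meixnerWeight (β - 1) c k := by
  have hΓ := Complex.Gamma_add_one ((k : ℂ) + (β - 1)) (by rwa [← add_sub_assoc])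
  rw [add_sub_assoc', sub_add_cancel] at hΓ
  rw [meixnerWeight, meixnerWeight, hΓ, add_sub_assoc]
  ring

lemma natCast_add_one_mul_meixnerWeight_succ (β c : ℂ) (k : ℕ) :
    ((k : ℂ) + 1) * meixnerWeight (β - 1) c (k + 1) = c * meixnerWeight β c k := by
  have hk : (k : ℂ) + 1 ≠ 0 := Nat.cast_add_one_ne_zero k
  rw [meixnerWeight, meixnerWeight, Nat.factorial_succ]
  push_cast
  rw [show (k : ℂ) + 1 + (β - 1) = k + β by ring]
  field_simp
  ring

lemma hasSum_natCast_mul_eval_sub_one_mul_meixnerWeight (R : ℂ[X]) (β : ℂ) {d : ℂ}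
    (hd : ‖d‖ < 1) :
    HasSum (fun k : ℕ => (k : ℂ) * R.eval ((k : ℂ) - 1) * meixnerWeight (β - 1) d k)
      (d * ∑' k : ℕ, R.eval (k : ℂ) * meixnerWeight β d k) := by
  rw [← hasSum_nat_add_iff' 1, Finset.sum_range_one, Nat.cast_zero, zero_mul, zero_mul,
    sub_zero]
  refine ((summable_eval_mul_meixnerWeight R β hd).hasSum.mul_left d).congr_fun fun k => ?_
  rw [mul_left_comm, ← natCast_add_one_mul_meixnerWeight_succ]
  push_cast [add_sub_cancel_right]
  ring

lemma tsum_eval_raiseMeixner_mul_meixnerWeight {β : ℂ} (hβ1 : ∀ m : ℕ, β - 1 ≠ -(m : ℂ))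
    (c : ℂ) {d : ℂ} (hd : ‖d‖ < 1) (P q : ℂ[X]) :
    ∑' k : ℕ, (raiseMeixner c β P).eval (k : ℂ) * q.eval (k : ℂ) *
        meixnerWeight (β - 1) d k =
      c / (c - 1) * ∑' k : ℕ, P.eval (k : ℂ) *
        (q - C (d / c) * q.comp (X + C 1)).eval (k : ℂ) * meixnerWeight β d k := by
  set S := ∑' k : ℕ, (P * q).eval (k : ℂ) * meixnerWeight β d k
  set T := ∑' k : ℕ, (P * q.comp (X + C 1)).eval (k : ℂ) * meixnerWeight β d k
  have hS : HasSum (fun k : ℕ => (P * q).eval (k : ℂ) * meixnerWeight β d k) S :=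
    (summable_eval_mul_meixnerWeight _ β hd).hasSum
  have hT :
      HasSum (fun k : ℕ => (P * q.comp (X + C 1)).eval (k : ℂ) * meixnerWeight β d k) T :=
    (summable_eval_mul_meixnerWeight _ β hd).hasSum
  have hshift := hasSum_natCast_mul_eval_sub_one_mul_meixnerWeight (P * q.comp (X + C 1)) β hd
  have hLHS : HasSum (fun k : ℕ => (raiseMeixner c β P).eval (k : ℂ) * q.eval (k : ℂ) *
      meixnerWeight (β - 1) d k) (c / (c - 1) * (S - c⁻¹ * (d * T))) :=
    ((hS.sub (hshift.mul_left c⁻¹)).mul_left _).congr_fun fun k => by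
      have hk : (k : ℂ) + β - 1 ≠ 0 := fun h => hβ1 k (by linear_combination h)
      rw [meixnerWeight_eq_mul_meixnerWeight_sub_one d hk]
      simp only [raiseMeixner, eval_mul, eval_sub, eval_add, eval_X, eval_C, eval_comp,
        sub_add_cancel]
      ring
  have hRHS : HasSum (fun k : ℕ => P.eval (k : ℂ) *
      (q - C (d / c) * q.comp (X + C 1)).eval (k : ℂ) * meixnerWeight β d k) (S - d / c * T) :=
    (hS.sub (hT.mul_left _)).congr_fun fun k => by
      simp only [eval_mul, eval_sub, eval_C, eval_comp]
      ring
  rw [hLHS.tsum_eq, hRHS.tsum_eq]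
  ring

lemma natDegree_raiseMeixner_le (c β : ℂ) (P : ℂ[X]) :
    (raiseMeixner c β P).natDegree ≤ P.natDegree + 1 := by
  unfold raiseMeixner
  compute_degree
  rw [natDegree_comp, ← C_1, natDegree_X_sub_C, mul_one, max_self, add_comm]

lemma coeff_raiseMeixner_natDegree_add_one {c : ℂ} (hc0 : c ≠ 0) (hc1 : c ≠ 1) (β : ℂ)
    (P : ℂ[X]) : (raiseMeixner c β P).coeff (P.natDegree + 1) = P.leadingCoeff := by
  have hcomp : (P.comp (X - C 1)).coeff P.natDegree = P.leadingCoeff := by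
    have h := leadingCoeff_comp (p := P) (q := X - C 1)
      (by rw [natDegree_X_sub_C]; exact one_ne_zero)
    rwa [leadingCoeff, natDegree_comp, natDegree_X_sub_C, mul_one, leadingCoeff_X_sub_C, one_pow,
      mul_one] at h
  simp only [raiseMeixner, coeff_C_mul, coeff_sub, add_mul, coeff_add, coeff_X_mul, hcomp,
    coeff_natDegree, coeff_eq_zero_of_natDegree_lt (Nat.lt_succ_self _)]
  field_simp
  ring

lemma natDegree_raiseMeixner {c : ℂ} (hc0 : c ≠ 0) (hc1 : c ≠ 1) (β : ℂ) {P : ℂ[X]}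
    (hP : P ≠ 0) : (raiseMeixner c β P).natDegree = P.natDegree + 1 :=
  natDegree_eq_of_le_of_coeff_ne_zero (natDegree_raiseMeixner_le c β P) <| by
    rw [coeff_raiseMeixner_natDegree_add_one hc0 hc1]
    exact leadingCoeff_ne_zero.mpr hP

lemma leadingCoeff_raiseMeixner {c : ℂ} (hc0 : c ≠ 0) (hc1 : c ≠ 1) (β : ℂ) (P : ℂ[X]) :
    (raiseMeixner c β P).leadingCoeff = P.leadingCoeff := by
  rcases eq_or_ne P 0 with rfl | hP
  · simp [raiseMeixner]
  · rw [leadingCoeff, natDegree_raiseMeixner hc0 hc1 β hP,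
      coeff_raiseMeixner_natDegree_add_one hc0 hc1]

theorem meixner_raising_general (r : ℕ) (β : ℂ)
    (hβ1 : ∀ m : ℕ, β - 1 ≠ -(m : ℂ))
    (c : Fin r → ℂ) (hc0 : ∀ i, c i ≠ 0) (hc1 : ∀ i, ‖c i‖ < 1)
    (n : Fin r → ℕ) (ℓ : Fin r) (P : Polynomial ℂ)
    (horth : ∀ i : Fin r, ∀ q : Polynomial ℂ, q.degree < (n i : WithBot ℕ) →
      ∑' k : ℕ, P.eval (k : ℂ) * q.eval (k : ℂ) *
        (Complex.Gamma ((k : ℂ) + β) * c i ^ k / (k.factorial : ℂ)) = 0) :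
    (∀ i : Fin r, ∀ q : Polynomial ℂ,
      q.degree < ((n i + if i = ℓ then 1 else 0 : ℕ) : WithBot ℕ) →
      ∑' k : ℕ, (raiseMeixner (c ℓ) β P).eval (k : ℂ) * q.eval (k : ℂ) *
        (Complex.Gamma ((k : ℂ) + β - 1) * c i ^ k / (k.factorial : ℂ)) = 0) ∧
    ∀ N : ℕ, P.Monic → P.natDegree = N →
      (raiseMeixner (c ℓ) β P).Monic ∧ (raiseMeixner (c ℓ) β P).natDegree = N + 1 := by
  refine ⟨fun i q hq => ?_, fun N hP hPN => ?_⟩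
  · have hdeg : (q - C (c i / c ℓ) * q.comp (X + C 1)).degree < n i := by
      by_cases hi : i = ℓ
      · subst hi
        rw [if_pos rfl] at hq
        rw [div_self (hc0 i), C_1, one_mul]
        exact degree_sub_comp_X_add_C_lt hq 1
      · rw [if_neg hi, add_zero] at hq
        exact (degree_sub_C_mul_comp_X_add_C_le q _ 1).trans_lt hq
    have h := tsum_eval_raiseMeixner_mul_meixnerWeight hβ1 (c ℓ) (hc1 i) P q
    simp only [meixnerWeight, ← add_sub_assoc] at h
    rw [h, horth i _ hdeg, mul_zero]
  · have hcℓ : c ℓ ≠ 1 := fun h => by simpa [h] using hc1 ℓ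
    exact ⟨(leadingCoeff_raiseMeixner (hc0 ℓ) hcℓ β P).trans hP,
      hPN ▸ natDegree_raiseMeixner (hc0 ℓ) hcℓ β hP.ne_zero⟩

/-- If `P` satisfies the Meixner orthogonality conditions for `(β, n)`,
then `Q = Ψ^β_{c_ℓ} P` satisfies them for `(β-1, n+e_ℓ)`; moreover `Q` is monic of degree
`N+1` whenever `P` is monic of degree `N`. -/
theorem meixner_raising (r : ℕ) (hr : 1 ≤ r) (β : ℂ)
    (hβ : ∀ m : ℕ, β ≠ -(m : ℂ)) (hβ1 : ∀ m : ℕ, β - 1 ≠ -(m : ℂ))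
    (c : Fin r → ℂ) (hc0 : ∀ i, c i ≠ 0) (hc1 : ∀ i, ‖c i‖ < 1)
    (n : Fin r → ℕ) (ℓ : Fin r) (P : Polynomial ℂ)
    (horth : ∀ i : Fin r, ∀ q : Polynomial ℂ, q.degree < (n i : WithBot ℕ) →
      ∑' k : ℕ, P.eval (k : ℂ) * q.eval (k : ℂ) *
        (Complex.Gamma ((k : ℂ) + β) * c i ^ k / (k.factorial : ℂ)) = 0) :
    (∀ i : Fin r, ∀ q : Polynomial ℂ,
      q.degree < ((n i + if i = ℓ then 1 else 0 : ℕ) : WithBot ℕ) →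
      ∑' k : ℕ, (raiseMeixner (c ℓ) β P).eval (k : ℂ) * q.eval (k : ℂ) *
        (Complex.Gamma ((k : ℂ) + β - 1) * c i ^ k / (k.factorial : ℂ)) = 0) ∧
    ∀ N : ℕ, P.Monic → P.natDegree = N →
      (raiseMeixner (c ℓ) β P).Monic ∧ (raiseMeixner (c ℓ) β P).natDegree = N + 1 :=
  meixner_raising_general r β hβ1 c hc0 hc1 n ℓ P horth
end

section
/- Let a, b be nonzero complex numbers, β ∈ ℂ, and k, m ∈ ℕ. For γ ∈ ℂ and c ∈ ℂ∖{0} define the operator on functions f : ℂ → ℂ by (Ψ̂^γ_c f)(x) = (x+γ−1)·f(x) − (x/c)·f(x−1). Then the compositions Ψ̂^{β+1}_a ∘ Ψ̂^{β+2}_a ∘ ⋯ ∘ Ψ̂^{β+k}_a ∘ Ψ̂^{β+k+1}_b ∘ ⋯ ∘ Ψ̂^{β+k+m}_b and Ψ̂^{β+1}_b ∘ Ψ̂^{β+2}_b ∘ ⋯ ∘ Ψ̂^{β+m}_b ∘ Ψ̂^{β+m+1}_a ∘ ⋯ ∘ Ψ̂^{β+m+k}_a are equal as operators on functions ℂ →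 ℂ. -/
/-- The normalized Meixner raising operator
`(Ψ̂^γ_c f)(x) = (x+γ-1)·f(x) - (x/c)·f(x-1)`. -/
noncomputable def PsiHat (γ c : ℂ) (f : ℂ → ℂ) : ℂ → ℂ :=
  fun x => (x + γ - 1) * f x - (x / c) * f (x - 1)

/-- The composition `Ψ̂^{γ₀+1}_c ∘ Ψ̂^{γ₀+2}_c ∘ ⋯ ∘ Ψ̂^{γ₀+j}_c`. -/
noncomputable def chainPsiHat (c : ℂ) : ℂ → ℕ → (ℂ → ℂ) → (ℂ → ℂ)
  | _, 0 => id
  | γ₀, j + 1 => PsiHat (γ₀ + 1) c ∘ chainPsiHat c (γ₀ + 1) j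

lemma psiHat_swap (a b γ : ℂ) :
    PsiHat γ a ∘ PsiHat (γ + 1) b = PsiHat γ b ∘ PsiHat (γ + 1) a := by
  funext f x
  simp only [Function.comp_apply, PsiHat]
  ring

lemma psiHat_pull (a b : ℂ) (γ : ℂ) (k : ℕ) :
    chainPsiHat a γ k ∘ PsiHat (γ + k + 1) b
      = PsiHat (γ + 1) b ∘ chainPsiHat a (γ + 1) k := by
  induction k generalizing γ with
  | zero => simp [chainPsiHat]
  | succ k ih =>
      have h : γ + (k + 1 : ℕ) + 1 = (γ + 1) + k + 1 := by push_cast; ring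
      calc chainPsiHat a γ (k + 1) ∘ PsiHat (γ + (k + 1 : ℕ) + 1) b
          = PsiHat (γ + 1) a ∘ (chainPsiHat a (γ + 1) k ∘ PsiHat ((γ + 1) + k + 1) b) := by
            rw [h]; rfl
        _ = PsiHat (γ + 1) a ∘ (PsiHat (γ + 1 + 1) b ∘ chainPsiHat a (γ + 1 + 1) k) := by
            rw [ih]
        _ = (PsiHat (γ + 1) a ∘ PsiHat (γ + 1 + 1) b) ∘ chainPsiHat a (γ + 1 + 1) k := rfl
        _ = (PsiHat (γ + 1) b ∘ PsiHat (γ + 1 + 1) a) ∘ chainPsiHat a (γ + 1 + 1) k := by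
            rw [psiHat_swap]
        _ = PsiHat (γ + 1) b ∘ chainPsiHat a (γ + 1) (k + 1) := rfl

/-- The commutation property of the normalized Meixner raising
operators: `Ψ̂^{β+1}_a ⋯ Ψ̂^{β+k}_a ∘ Ψ̂^{β+k+1}_b ⋯ Ψ̂^{β+k+m}_b =
Ψ̂^{β+1}_b ⋯ Ψ̂^{β+m}_b ∘ Ψ̂^{β+m+1}_a ⋯ Ψ̂^{β+m+k}_a`. -/
theorem psiHat_chains_comm (a b : ℂ) (ha : a ≠ 0) (hb : b ≠ 0) (β : ℂ) (k m : ℕ) :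
    chainPsiHat a β k ∘ chainPsiHat b (β + k) m
      = chainPsiHat b β m ∘ chainPsiHat a (β + m) k := by
  induction m generalizing β with
  | zero => simp [chainPsiHat]
  | succ m ih =>
      calc chainPsiHat a β k ∘ chainPsiHat b (β + k) (m + 1)
          = (chainPsiHat a β k ∘ PsiHat (β + k + 1) b) ∘ chainPsiHat b (β + k + 1) m := rfl
        _ = (PsiHat (β + 1) b ∘ chainPsiHat a (β + 1) k) ∘ chainPsiHat b (β + k + 1) m := by
            rw [psiHat_pull]
        _ = PsiHat (β + 1) b ∘ (chainPsiHat a (β + 1) k ∘ chainPsiHat b ((β + 1) + k) m) := by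
            have : β + (k : ℂ) + 1 = (β + 1) + k := by ring
            rw [this]; rfl
        _ = PsiHat (β + 1) b ∘ (chainPsiHat b (β + 1) m ∘ chainPsiHat a ((β + 1) + m) k) := by
            rw [ih]
        _ = chainPsiHat b β (m + 1) ∘ chainPsiHat a (β + (m + 1 : ℕ)) k := by
            have : (β + 1) + (m : ℂ) = β + (m + 1 : ℕ) := by push_cast; ring
            rw [this]; rfl
end

section
/- Let r ≥ 1, β ∈ ℂ, and let c_0,…,c_{r−1} be complex numbers with c_ℓ ≠ 1 for all ℓ, and let n = (n_0,…,n_{r−1}) ∈ ℕ^r. Then the polynomial M^{β,c}_n is monic of degree |n|, and its value at 0 is M^{β,c}_n(0) = (β)_{|n|}·Π_{ℓ=0}^{r−1} (c_ℓ/(c_ℓ−1))^{n_ℓ}, where (β)_{|n|} = β(β+1)⋯(β+|n|−1). -/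
open Polynomial

/-- The type II Meixner--Angelesco polynomial of the first kind
(in the variable `x = z^r`). -/
noncomputable def meixnerAngelescoP (r : ℕ) (β : ℂ) (c : Fin r → ℂ) (n : Fin r → ℕ) :
    Polynomial ℂ :=
  ∑ k ∈ Fintype.piFinset (fun i : Fin r => Finset.range (n i + 1)),
    Polynomial.C
        (∏ ℓ : Fin r, ((n ℓ).choose (k ℓ) : ℂ) * (c ℓ) ^ (n ℓ - k ℓ) / (c ℓ - 1) ^ (n ℓ)) *
      pochP (-X) (∑ i, k i) * pochP (X + Polynomial.C β) ((∑ i, n i) - ∑ i, k i)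

lemma negX_eq (i : ℕ) : (-X + Polynomial.C (i : ℂ)) = -(X - Polynomial.C (i : ℂ)) := by ring

lemma Xbeta_eq (β : ℂ) (i : ℕ) :
    (X + Polynomial.C β + Polynomial.C (i : ℂ)) = X + Polynomial.C (β + i) := by
  rw [map_add]; ring

lemma natDegree_pochP_negX (m : ℕ) : (pochP (-X) m).natDegree = m := by
  unfold pochP
  rw [Polynomial.natDegree_prod]
  · simp only [negX_eq, natDegree_neg, natDegree_X_sub_C, Finset.sum_const,
      Finset.card_range, smul_eq_mul, mul_one]
  · intro i _ h
    rw [negX_eq, neg_eq_zero] at h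
    exact X_sub_C_ne_zero (i : ℂ) h

lemma leadingCoeff_pochP_negX (m : ℕ) : (pochP (-X) m).leadingCoeff = (-1) ^ m := by
  unfold pochP
  rw [Polynomial.leadingCoeff_prod]
  have h : ∀ i : ℕ, (-X + Polynomial.C (i : ℂ)).leadingCoeff = -1 := by
    intro i
    rw [negX_eq, leadingCoeff_neg, (monic_X_sub_C (i : ℂ)).leadingCoeff]
  simp only [h, Finset.prod_const, Finset.card_range]

lemma monic_pochP_Xbeta (β : ℂ) (m : ℕ) : (pochP (X + Polynomial.C β) m).Monic := by
  unfold pochP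
  apply monic_prod_of_monic
  intro i _
  rw [Xbeta_eq]
  exact monic_X_add_C _

lemma natDegree_pochP_Xbeta (β : ℂ) (m : ℕ) :
    (pochP (X + Polynomial.C β) m).natDegree = m := by
  unfold pochP
  rw [Polynomial.natDegree_prod]
  · simp only [Xbeta_eq, natDegree_X_add_C, Finset.sum_const, Finset.card_range,
      smul_eq_mul, mul_one]
  · intro i _
    rw [Xbeta_eq]
    exact X_add_C_ne_zero _

lemma coeff_pp (β : ℂ) (a b m : ℕ) (h : m = a + b) :
    (pochP (-X) a * pochP (X + Polynomial.C β) b).coeff m = (-1) ^ a := by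
  subst h
  have h1 := Polynomial.coeff_mul_degree_add_degree (pochP (-X) a)
    (pochP (X + Polynomial.C β) b)
  rw [natDegree_pochP_negX, natDegree_pochP_Xbeta] at h1
  rw [h1, leadingCoeff_pochP_negX, (monic_pochP_Xbeta β b).leadingCoeff, mul_one]

/-- The Meixner--Angelesco polynomial `M^{β,c}_n` is monic of degree
`|n|` and `M^{β,c}_n(0) = (β)_{|n|} ∏_ℓ (c_ℓ/(c_ℓ-1))^{n_ℓ}`. -/
theorem meixner_angelesco_monic_value_at_zero (r : ℕ) (hr : 1 ≤ r) (β : ℂ)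
    (c : Fin r → ℂ) (hc1 : ∀ ℓ, c ℓ ≠ 1) (n : Fin r → ℕ) :
    (meixnerAngelescoP r β c n).Monic ∧
    (meixnerAngelescoP r β c n).natDegree = ∑ i, n i ∧
    (meixnerAngelescoP r β c n).eval 0
      = poch β (∑ i, n i) * ∏ ℓ : Fin r, (c ℓ / (c ℓ - 1)) ^ (n ℓ) := by
  classical
  set N := ∑ i, n i with hN
  set S := Fintype.piFinset (fun i : Fin r => Finset.range (n i + 1)) with hS
  have hkle : ∀ k ∈ S, (∑ i, k i) ≤ N := by
    intro k hk
    apply Finset.sum_le_sum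
    intro i _
    have := Fintype.mem_piFinset.mp hk i
    simp only [Finset.mem_range] at this
    omega
  -- coefficient of each summand at degree N
  have hcoeff : ∀ k ∈ S,
      (Polynomial.C
          (∏ ℓ : Fin r, ((n ℓ).choose (k ℓ) : ℂ) * (c ℓ) ^ (n ℓ - k ℓ) / (c ℓ - 1) ^ (n ℓ)) *
        pochP (-X) (∑ i, k i) * pochP (X + Polynomial.C β) (N - ∑ i, k i)).coeff N
      = (∏ ℓ : Fin r, ((n ℓ).choose (k ℓ) : ℂ) * (c ℓ) ^ (n ℓ - k ℓ) / (c ℓ - 1) ^ (n ℓ)) *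
          (-1) ^ (∑ i, k i) := by
    intro k hk
    have hkN := hkle k hk
    rw [mul_assoc, Polynomial.coeff_C_mul,
      coeff_pp β (∑ i, k i) (N - ∑ i, k i) N (by omega)]
  -- per-index binomial identity
  have key : ∀ ℓ : Fin r, (∑ j ∈ Finset.range (n ℓ + 1),
      ((n ℓ).choose j : ℂ) * (c ℓ) ^ (n ℓ - j) / (c ℓ - 1) ^ (n ℓ) * (-1) ^ j) = 1 := by
    intro ℓ
    have hc : (c ℓ - 1) ^ (n ℓ) ≠ 0 := pow_ne_zero _ (sub_ne_zero.mpr (hc1 ℓ))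
    have hb := add_pow (-1 : ℂ) (c ℓ) (n ℓ)
    rw [show (-1 : ℂ) + c ℓ = c ℓ - 1 by ring] at hb
    have hh : (∑ j ∈ Finset.range (n ℓ + 1),
        ((n ℓ).choose j : ℂ) * (c ℓ) ^ (n ℓ - j) / (c ℓ - 1) ^ (n ℓ) * (-1) ^ j)
        = (∑ j ∈ Finset.range (n ℓ + 1),
            (-1 : ℂ) ^ j * (c ℓ) ^ (n ℓ - j) * ((n ℓ).choose j)) / (c ℓ - 1) ^ (n ℓ) := by
      rw [Finset.sum_div]
      apply Finset.sum_congr rfl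
      intro j _
      rw [div_mul_eq_mul_div]
      congr 1
      ring
    rw [hh, ← hb, div_self hc]
  -- coefficient of M at N is 1
  have hcoeffN : (meixnerAngelescoP r β c n).coeff N = 1 := by
    unfold meixnerAngelescoP
    rw [← hN, ← hS, Polynomial.finset_sum_coeff, Finset.sum_congr rfl hcoeff]
    have step : ∀ k ∈ S,
        (∏ ℓ : Fin r, ((n ℓ).choose (k ℓ) : ℂ) * (c ℓ) ^ (n ℓ - k ℓ) / (c ℓ - 1) ^ (n ℓ)) *
          (-1 : ℂ) ^ (∑ i, k i)
        = ∏ ℓ : Fin r, (((n ℓ).choose (k ℓ) : ℂ) * (c ℓ) ^ (n ℓ - k ℓ) / (c ℓ - 1) ^ (n ℓ) *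
            (-1) ^ (k ℓ)) := by
      intro k _
      rw [← Finset.prod_pow_eq_pow_sum, ← Finset.prod_mul_distrib]
    rw [Finset.sum_congr rfl step, hS,
      ← Finset.prod_univ_sum (fun i : Fin r => Finset.range (n i + 1))
        (fun ℓ j => ((n ℓ).choose j : ℂ) * (c ℓ) ^ (n ℓ - j) / (c ℓ - 1) ^ (n ℓ) * (-1) ^ j)]
    simp [key]
  -- degree bound
  have hdegle : (meixnerAngelescoP r β c n).natDegree ≤ N := by
    unfold meixnerAngelescoP
    rw [← hN, ← hS]
    apply Polynomial.natDegree_sum_le_of_forall_le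
    intro k hk
    have hkN := hkle k hk
    refine (Polynomial.natDegree_mul_le).trans ?_
    have h3 : (Polynomial.C
        (∏ ℓ : Fin r, ((n ℓ).choose (k ℓ) : ℂ) * (c ℓ) ^ (n ℓ - k ℓ) / (c ℓ - 1) ^ (n ℓ)) *
        pochP (-X) (∑ i, k i)).natDegree ≤ ∑ i, k i := by
      refine (Polynomial.natDegree_mul_le).trans ?_
      simp [natDegree_pochP_negX]
    rw [natDegree_pochP_Xbeta]
    omega
  have hmonic : (meixnerAngelescoP r β c n).Monic :=
    Polynomial.monic_of_natDegree_le_of_coeff_eq_one N hdegle hcoeffN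
  have hdeg : (meixnerAngelescoP r β c n).natDegree = N := by
    refine le_antisymm hdegle ?_
    apply Polynomial.le_natDegree_of_ne_zero
    rw [hcoeffN]; exact one_ne_zero
  refine ⟨hmonic, hdeg, ?_⟩
  -- evaluation at 0
  have hev0 : ∀ m : ℕ, 0 < m → Polynomial.eval 0 (pochP (-X) m) = 0 := by
    intro m hm
    unfold pochP
    rw [Polynomial.eval_prod]
    apply Finset.prod_eq_zero (Finset.mem_range.mpr hm)
    simp
  have hevβ : ∀ m : ℕ, Polynomial.eval 0 (pochP (X + Polynomial.C β) m) = poch β m := by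
    intro m
    unfold pochP poch
    rw [Polynomial.eval_prod]
    simp
  unfold meixnerAngelescoP
  rw [← hN, ← hS, Polynomial.eval_finset_sum]
  rw [Finset.sum_eq_single (fun _ : Fin r => (0 : ℕ))]
  · simp only [Finset.sum_const_zero, Nat.sub_zero, Polynomial.eval_mul, Polynomial.eval_C,
      Nat.choose_zero_right, Nat.cast_one, one_mul, hevβ]
    have : Polynomial.eval 0 (pochP (-X) 0) = 1 := by
      unfold pochP; simp
    rw [this, mul_one]
    rw [mul_comm]
    congr 1
    apply Finset.prod_congr rfl
    intro ℓ _
    rw [div_pow]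
  · intro k hk hne
    have hm : 0 < ∑ i, k i := by
      rcases Nat.eq_zero_or_pos (∑ i, k i) with h | h
      · exfalso
        apply hne
        funext i
        have := Finset.sum_eq_zero_iff.mp h i (Finset.mem_univ i)
        exact this
      · exact h
    simp [Polynomial.eval_mul, hev0 _ hm]
  · intro h
    exfalso
    apply h
    rw [hS]
    simp [Fintype.mem_piFinset]
end

section
/- Let r ≥ 1, β ∈ ℂ, and let c_0,…,c_{r−1} be complex numbers with c_j ≠ 0 and c_j ≠ 1 for all j, and let n = (n_0,…,n_{r−1}) ∈ ℕ^r with n_j ≥ 1 for all j. Then for every ℓ ∈ {0,…,r−1} the polynomial identity (x − b_{n,ℓ})·M^{β,c}_n(x) − M^{β,c}_{n+e_ℓ}(x) = Σ_{j=0}^{r−1} d_{n,j}·M^{β,c}_{n−e_j}(x) holds in ℂ[x], with b_{n,ℓ} = (|n|+β)·c_ℓ/(1−c_ℓ) + Σ_{j=0}^{r−1} n_j/(1−c_j) and d_{n,j} = c_j·n_j·(β+|n|−1)/(c_j−1)^2, where e_ℓ is the ℓ-th standard unit multi-index. -/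
open Polynomial

/-! ### Auxiliary machinery -/

/-- The linear "basis expansion" operator: `Phi β N Q = ∑_m Q_m (-x)_m (x+β)_{N-m}`. -/
noncomputable def Phi (β : ℂ) (N : ℕ) (Q : Polynomial ℂ) : Polynomial ℂ :=
  ∑ m ∈ Finset.range (N+1), Polynomial.C (Q.coeff m) * (pochP (-X) m * pochP (X + C β) (N - m))

lemma pochP_succ (p : Polynomial ℂ) (m : ℕ) :
    pochP p (m+1) = pochP p m * (p + C (m:ℂ)) := Finset.prod_range_succ _ _

lemma Phi_add (β : ℂ) (N : ℕ) (Q1 Q2 : Polynomial ℂ) :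
    Phi β N (Q1 + Q2) = Phi β N Q1 + Phi β N Q2 := by
  simp [Phi, add_mul, Finset.sum_add_distrib]

lemma Phi_sub (β : ℂ) (N : ℕ) (Q1 Q2 : Polynomial ℂ) :
    Phi β N (Q1 - Q2) = Phi β N Q1 - Phi β N Q2 := by
  simp [Phi, sub_mul, Finset.sum_sub_distrib]

lemma Phi_C_mul (β : ℂ) (N : ℕ) (a : ℂ) (Q : Polynomial ℂ) :
    Phi β N (C a * Q) = C a * Phi β N Q := by
  simp [Phi, Finset.mul_sum, mul_assoc]

lemma Phi_sum {ι : Type*} (β : ℂ) (N : ℕ) (s : Finset ι) (f : ι → Polynomial ℂ) :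
    Phi β N (∑ k ∈ s, f k) = ∑ k ∈ s, Phi β N (f k) := by
  simp only [Phi, finset_sum_coeff, map_sum, Finset.sum_mul]
  exact Finset.sum_comm

lemma Phi_monomial (β : ℂ) (N : ℕ) (a : ℂ) (m : ℕ) (hm : m ≤ N) :
    Phi β N (C a * X ^ m) = C a * (pochP (-X) m * pochP (X + C β) (N - m)) := by
  rw [Phi, Finset.sum_eq_single m]
  · simp [coeff_C_mul, coeff_X_pow]
  · intro i _ hi; simp [coeff_C_mul, coeff_X_pow, hi]
  · intro h; exact absurd (Finset.mem_range.mpr (Nat.lt_succ_of_le hm)) h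

lemma Phi_step (β : ℂ) (N : ℕ) (Q : Polynomial ℂ) (hQ : Q.natDegree ≤ N) :
    Phi β (N+1) ((X + 1) * Q) = C ((N:ℂ) + β) * Phi β N Q := by
  have hsplit : (X + 1) * Q = X * Q + Q := by ring
  rw [Phi, Phi, Finset.mul_sum]
  simp only [hsplit, coeff_add, map_add, add_mul, Finset.sum_add_distrib]
  have h1 := Finset.sum_range_succ' (fun m => C ((X * Q).coeff m) * (pochP (-X) m * pochP (X + C β) (N + 1 - m))) (N+1)
  have h2 := Finset.sum_range_succ (fun m => C (Q.coeff m) * (pochP (-X) m * pochP (X + C β) (N + 1 - m))) (N+1)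
  rw [h1, h2]
  have h0 : (X * Q).coeff 0 = 0 := by simp
  have hN1 : Q.coeff (N+1) = 0 :=
    coeff_eq_zero_of_natDegree_lt (lt_of_le_of_lt hQ (Nat.lt_succ_self N))
  rw [h0, hN1]
  simp only [map_zero, zero_mul, add_zero]
  rw [← Finset.sum_add_distrib, ← Finset.sum_add_distrib]
  refine Finset.sum_congr rfl ?_
  intro m hm
  have hm' : m ≤ N := Nat.lt_succ_iff.mp (Finset.mem_range.mp hm)
  have e1 : N + 1 - (m + 1) = N - m := by omega
  have e2 : N + 1 - m = (N - m) + 1 := by omega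
  have e3 : ((N - m : ℕ) : ℂ) = (N : ℂ) - (m : ℂ) := Nat.cast_sub hm'
  simp only [coeff_X_mul, e1, e2, pochP_succ, e3, map_sub]
  ring

lemma coeff_X_mul_derivative (Q : Polynomial ℂ) (m : ℕ) :
    (X * derivative Q).coeff m = m * Q.coeff m := by
  cases m with
  | zero => simp
  | succ k => rw [coeff_X_mul, coeff_derivative]; push_cast; ring

lemma Phi_X (β : ℂ) (N : ℕ) (Q : Polynomial ℂ) :
    X * Phi β N Q = Phi β N (X * derivative Q) - Phi β (N+1) (X * Q) := by
  rw [Phi, Phi, Phi, Finset.mul_sum]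
  have h1 := Finset.sum_range_succ' (fun m => C ((X * Q).coeff m) * (pochP (-X) m * pochP (X + C β) (N + 1 - m))) (N+1)
  rw [h1]
  have h0 : (X * Q).coeff 0 = 0 := by simp
  rw [h0]
  simp only [map_zero, zero_mul, add_zero, coeff_X_mul, coeff_X_mul_derivative]
  rw [← Finset.sum_sub_distrib]
  refine Finset.sum_congr rfl ?_
  intro m hm
  have e1 : N + 1 - (m + 1) = N - m := by omega
  simp only [e1, pochP_succ, map_mul, map_natCast]
  ring

lemma MA_eq_Phi (r : ℕ) (β : ℂ) (c : Fin r → ℂ) (n : Fin r → ℕ) :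
    meixnerAngelescoP r β c n = Phi β (∑ i, n i)
      (∑ k ∈ Fintype.piFinset (fun i : Fin r => Finset.range (n i + 1)),
        C (∏ ℓ : Fin r, ((n ℓ).choose (k ℓ) : ℂ) * (c ℓ) ^ (n ℓ - k ℓ) / (c ℓ - 1) ^ (n ℓ)) *
          X ^ (∑ i, k i)) := by
  rw [Phi_sum, meixnerAngelescoP]
  refine Finset.sum_congr rfl ?_
  intro k hk
  have hkle : (∑ i, k i) ≤ ∑ i, n i := by
    refine Finset.sum_le_sum ?_
    intro i _
    have := (Fintype.mem_piFinset.mp hk) i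
    exact Nat.lt_succ_iff.mp (Finset.mem_range.mp this)
  rw [Phi_monomial _ _ _ _ hkle, mul_assoc]

lemma genpoly (r : ℕ) (c : Fin r → ℂ) (n : Fin r → ℕ) :
    (∑ k ∈ Fintype.piFinset (fun i : Fin r => Finset.range (n i + 1)),
        C (∏ ℓ : Fin r, ((n ℓ).choose (k ℓ) : ℂ) * (c ℓ) ^ (n ℓ - k ℓ) / (c ℓ - 1) ^ (n ℓ)) *
          X ^ (∑ i, k i))
      = C ((∏ ℓ : Fin r, (c ℓ - 1) ^ (n ℓ))⁻¹) * ∏ ℓ : Fin r, (X + C (c ℓ)) ^ (n ℓ) := by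
  have hexp : ∀ ℓ : Fin r, (X + C (c ℓ)) ^ (n ℓ)
      = ∑ k ∈ Finset.range (n ℓ + 1),
          C (((n ℓ).choose k : ℂ) * (c ℓ) ^ (n ℓ - k)) * X ^ k := by
    intro ℓ
    rw [add_pow]
    refine Finset.sum_congr rfl ?_
    intro k _
    simp only [map_mul, map_natCast, map_pow]
    ring
  conv_rhs => rw [Finset.prod_congr rfl (fun ℓ _ => hexp ℓ)]
  rw [Finset.prod_univ_sum, Finset.mul_sum]
  refine Finset.sum_congr rfl ?_
  intro k _
  rw [Finset.prod_mul_distrib, Finset.prod_pow_eq_pow_sum, ← map_prod, ← mul_assoc, ← map_mul]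
  congr 2
  rw [Finset.prod_div_distrib, div_eq_mul_inv, mul_comm]

lemma prod_pow_succ {M : Type*} [CommMonoid M] {r : ℕ} (f : Fin r → M) (n : Fin r → ℕ) (ℓ : Fin r) :
    ∏ i, f i ^ (n i + if i = ℓ then 1 else 0) = f ℓ * ∏ i, f i ^ n i := by
  simp only [pow_add]
  rw [Finset.prod_mul_distrib, mul_comm]
  congr 1
  rw [show (∏ i, f i ^ if i = ℓ then 1 else 0) = ∏ i, if i = ℓ then f i else 1 by
    refine Finset.prod_congr rfl fun i _ => by split <;> simp]
  simp

lemma prod_pow_pred {M : Type*} [CommMonoid M] {r : ℕ} (f : Fin r → M) (n : Fin r → ℕ)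
    (hn : ∀ j, 1 ≤ n j) (j : Fin r) :
    f j * ∏ i, f i ^ (n i - if i = j then 1 else 0) = ∏ i, f i ^ n i := by
  have h := prod_pow_succ f (fun i => n i - if i = j then 1 else 0) j
  rw [← h]
  refine Finset.prod_congr rfl fun i _ => by
    congr 1
    have := hn i
    split <;> omega

lemma sum_succ_eq {r : ℕ} (n : Fin r → ℕ) (ℓ : Fin r) :
    (∑ i, (n i + if i = ℓ then 1 else 0)) = (∑ i, n i) + 1 := by
  rw [Finset.sum_add_distrib]
  simp

lemma sum_pred_eq {r : ℕ} (n : Fin r → ℕ) (hn : ∀ j, 1 ≤ n j) (j : Fin r) :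
    (∑ i, (n i - if i = j then 1 else 0)) = (∑ i, n i) - 1 := by
  have h : (∑ i, (n i - if i = j then 1 else 0)) + (∑ i, if i = j then 1 else 0) = ∑ i, n i := by
    rw [← Finset.sum_add_distrib]
    refine Finset.sum_congr rfl fun i _ => by have := hn i; split <;> omega
  have h2 : (∑ i : Fin r, if i = j then 1 else 0) = 1 := by simp
  omega

lemma derivative_finset_prod {ι : Type*} [DecidableEq ι] (s : Finset ι) (f : ι → Polynomial ℂ) :
    derivative (∏ i ∈ s, f i) = ∑ i ∈ s, (∏ j ∈ s.erase i, f j) * derivative (f i) := by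
  rw [Finset.prod_eq_multiset_prod, Polynomial.derivative_prod, Finset.sum_eq_multiset_sum]
  congr 1

lemma deriv_prod_pow {r : ℕ} (c : Fin r → ℂ) (n : Fin r → ℕ) (hn : ∀ j, 1 ≤ n j) :
    derivative (∏ i, (X + C (c i)) ^ (n i))
      = ∑ j, C ((n j : ℂ)) * ∏ i, (X + C (c i)) ^ (n i - if i = j then 1 else 0) := by
  rw [derivative_finset_prod]
  refine Finset.sum_congr rfl ?_
  intro j _
  rw [derivative_pow, derivative_X_add_C]
  have hQ : ∏ i, (X + C (c i)) ^ (n i - if i = j then 1 else 0)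
      = (X + C (c j)) ^ (n j - 1) * ∏ i ∈ Finset.univ.erase j, (X + C (c i)) ^ (n i) := by
    rw [← Finset.mul_prod_erase Finset.univ (fun i => (X + C (c i)) ^ (n i - if i = j then 1 else 0)) (Finset.mem_univ j)]
    simp only [if_pos rfl]
    congr 1
    refine Finset.prod_congr rfl fun i hi => by
      rw [if_neg (Finset.mem_erase.mp hi).1, Nat.sub_zero]
  rw [hQ]
  simp only [map_natCast, mul_one]
  ring

lemma per_j (γ m u d : ℂ) (Q : Polynomial ℂ) (hu : (γ - 1) * u = 1) :
    C d * (X * (C m * Q)) - C (m * (-u)) * (C d * ((X + C γ) * Q))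
      = C (γ * m * (u*u)) * ((X + 1) * (C ((γ - 1) * d) * Q)) := by
  have huC : (C γ - 1) * C u = (1 : Polynomial ℂ) := by
    rw [← map_one (@C ℂ _), ← map_sub, ← map_mul, hu, map_one]
  simp only [map_mul, map_neg, map_sub, map_one]
  linear_combination (-(C d * C m * Q) * (X * (1 + C γ * C u) + C γ * C u)) * huC

lemma comb_eq (cl dinv : ℂ) (P : Polynomial ℂ) (h : (cl - 1) ≠ 0) :
    X * (C dinv * P) + C ((cl - 1)⁻¹ * dinv) * ((X + C cl) * P)
      = (X + 1) * (C (cl * (cl - 1)⁻¹) * (C dinv * P)) := by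
  have huC : (C cl - 1) * C ((cl - 1)⁻¹) = (1 : Polynomial ℂ) := by
    rw [← map_one (@C ℂ _), ← map_sub, ← map_mul, mul_inv_cancel₀ h, map_one]
  simp only [map_mul]
  linear_combination (-(C dinv * P * X)) * huC

/-- Nearest neighbor recurrence for the type II Meixner--Angelesco
polynomials of the first kind:
`(x - b_{n,ℓ}) M^{β,c}_n(x) - M^{β,c}_{n+e_ℓ}(x) = ∑_j d_{n,j} M^{β,c}_{n-e_j}(x)` with
`b_{n,ℓ} = (|n|+β) c_ℓ/(1-c_ℓ) + ∑_j n_j/(1-c_j)` and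
`d_{n,j} = c_j n_j (β+|n|-1)/(c_j-1)²`. -/
theorem meixner_angelesco_recurrence (r : ℕ) (hr : 1 ≤ r) (β : ℂ) (c : Fin r → ℂ)
    (hc0 : ∀ j, c j ≠ 0) (hc1 : ∀ j, c j ≠ 1) (n : Fin r → ℕ) (hn : ∀ j, 1 ≤ n j)
    (ℓ : Fin r) :
    ((X : Polynomial ℂ) -
        Polynomial.C ((((∑ i, n i : ℕ) : ℂ) + β) * c ℓ / (1 - c ℓ) +
          ∑ j : Fin r, (n j : ℂ) / (1 - c j))) * meixnerAngelescoP r β c n -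
      meixnerAngelescoP r β c (fun i => n i + if i = ℓ then 1 else 0)
    = ∑ j : Fin r,
        Polynomial.C (c j * (n j : ℂ) * (β + ((∑ i, n i : ℕ) : ℂ) - 1) / (c j - 1) ^ 2) *
          meixnerAngelescoP r β c (fun i => n i - if i = j then 1 else 0) := by
  classical
  set N := ∑ i, n i with hN
  set P : Polynomial ℂ := ∏ i, (X + C (c i)) ^ (n i) with hPdef
  set Qp : Fin r → Polynomial ℂ :=
    fun j => ∏ i, (X + C (c i)) ^ (n i - if i = j then 1 else 0) with hQpdef
  set D : ℂ := ∏ i, (c i - 1) ^ (n i) with hDdef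
  have hN1 : 1 ≤ N := by
    calc 1 ≤ r := hr
    _ = ∑ _i : Fin r, 1 := by simp
    _ ≤ N := Finset.sum_le_sum fun i _ => hn i
  have hcne : ∀ j, c j - 1 ≠ 0 := fun j => sub_ne_zero.mpr (hc1 j)
  have hcne' : ∀ j, (1 : ℂ) - c j ≠ 0 := fun j => sub_ne_zero.mpr (Ne.symm (hc1 j))
  have hdeg : ∀ (m : Fin r → ℕ),
      (∏ i, (X + C (c i)) ^ (m i) : Polynomial ℂ).natDegree ≤ ∑ i, m i := by
    intro m
    refine le_trans (Polynomial.natDegree_prod_le _ _) (Finset.sum_le_sum ?_)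
    intro i _
    refine le_trans (Polynomial.natDegree_pow_le) ?_
    rw [Polynomial.natDegree_X_add_C]
    simp
  have hPdeg : P.natDegree ≤ N := hdeg n
  have hQdeg : ∀ j, (Qp j).natDegree ≤ N - 1 := fun j => by
    refine le_trans (hdeg _) ?_
    rw [sum_pred_eq n hn j]
  -- expansions of the three Meixner–Angelesco polynomials
  have hM : meixnerAngelescoP r β c n = Phi β N (C D⁻¹ * P) := by
    rw [MA_eq_Phi, genpoly, hN, hPdef, hDdef]
  have hMs : meixnerAngelescoP r β c (fun i => n i + if i = ℓ then 1 else 0)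
      = Phi β (N + 1) (C ((c ℓ - 1)⁻¹ * D⁻¹) * ((X + C (c ℓ)) * P)) := by
    rw [MA_eq_Phi, genpoly, sum_succ_eq n ℓ,
      prod_pow_succ (fun i => (X + C (c i))) n ℓ,
      prod_pow_succ (fun i => c i - 1) n ℓ, mul_inv, hN, hPdef, hDdef]
  have hMp : ∀ j, meixnerAngelescoP r β c (fun i => n i - if i = j then 1 else 0)
      = Phi β (N - 1) (C ((c j - 1) * D⁻¹) * Qp j) := by
    intro j
    rw [MA_eq_Phi, genpoly, sum_pred_eq n hn j]
    have h := prod_pow_pred (fun i => c i - 1) n hn j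
    have hinv : (∏ i, (c i - 1) ^ (n i - if i = j then 1 else 0))⁻¹ = (c j - 1) * D⁻¹ := by
      rw [hDdef, ← h, mul_inv, ← mul_assoc, mul_inv_cancel₀ (hcne j), one_mul]
    rw [hinv, hN, hQpdef]
  rw [hM, hMs, sub_mul, Phi_X β N (C D⁻¹ * P)]
  -- combine the two level-(N+1) terms
  have hdeg2 : (C (c ℓ * (c ℓ - 1)⁻¹) * (C D⁻¹ * P)).natDegree ≤ N :=
    le_trans (natDegree_C_mul_le _ _) (le_trans (natDegree_C_mul_le _ _) hPdeg)
  have hcomb : Phi β (N+1) (X * (C D⁻¹ * P))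
        + Phi β (N+1) (C ((c ℓ - 1)⁻¹ * D⁻¹) * ((X + C (c ℓ)) * P))
      = C ((N:ℂ) + β) * (C (c ℓ * (c ℓ - 1)⁻¹) * Phi β N (C D⁻¹ * P)) := by
    rw [← Phi_add, comb_eq (c ℓ) D⁻¹ P (hcne ℓ),
      Phi_step β N (C (c ℓ * (c ℓ - 1)⁻¹) * (C D⁻¹ * P)) hdeg2, Phi_C_mul]
  -- rewrite the right-hand side
  have hRj : ∀ j : Fin r,
      C (c j * (n j : ℂ) * (β + (N:ℂ) - 1) / (c j - 1) ^ 2)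
          * Phi β (N - 1) (C ((c j - 1) * D⁻¹) * Qp j)
        = Phi β N (C (c j * (n j : ℂ) * ((c j - 1)⁻¹ * (c j - 1)⁻¹))
            * ((X + 1) * (C ((c j - 1) * D⁻¹) * Qp j))) := by
    intro j
    have hdeg3 : (C ((c j - 1) * D⁻¹) * Qp j).natDegree ≤ N - 1 :=
      le_trans (natDegree_C_mul_le _ _) (hQdeg j)
    have hstep := Phi_step β (N-1) (C ((c j - 1) * D⁻¹) * Qp j) hdeg3
    rw [Nat.sub_add_cancel hN1] at hstep
    have hcast : ((N - 1 : ℕ) : ℂ) = (N : ℂ) - 1 := by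
      rw [Nat.cast_sub hN1]; norm_num
    calc C (c j * (n j : ℂ) * (β + (N:ℂ) - 1) / (c j - 1) ^ 2)
          * Phi β (N - 1) (C ((c j - 1) * D⁻¹) * Qp j)
        = C (c j * (n j : ℂ) * ((c j - 1)⁻¹ * (c j - 1)⁻¹))
            * (C (((N - 1 : ℕ) : ℂ) + β)
              * Phi β (N - 1) (C ((c j - 1) * D⁻¹) * Qp j)) := by
          rw [← mul_assoc, ← map_mul]
          congr 2
          rw [hcast]
          field_simp
          ring
      _ = C (c j * (n j : ℂ) * ((c j - 1)⁻¹ * (c j - 1)⁻¹))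
            * Phi β N ((X + 1) * (C ((c j - 1) * D⁻¹) * Qp j)) := by rw [hstep]
      _ = Phi β N (C (c j * (n j : ℂ) * ((c j - 1)⁻¹ * (c j - 1)⁻¹))
            * ((X + 1) * (C ((c j - 1) * D⁻¹) * Qp j))) := (Phi_C_mul _ _ _ _).symm
  have hRHS : (∑ j : Fin r,
        C (c j * (n j : ℂ) * (β + (N:ℂ) - 1) / (c j - 1) ^ 2) *
          meixnerAngelescoP r β c (fun i => n i - if i = j then 1 else 0))
      = Phi β N (∑ j : Fin r, C (c j * (n j : ℂ) * ((c j - 1)⁻¹ * (c j - 1)⁻¹))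
            * ((X + 1) * (C ((c j - 1) * D⁻¹) * Qp j))) := by
    rw [Phi_sum]
    exact Finset.sum_congr rfl fun j _ => by rw [hMp j, hRj j]
  rw [hRHS]
  -- rewrite the derivative
  have hdP : derivative P = ∑ j, C ((n j : ℂ)) * Qp j := by
    rw [hPdef]; exact deriv_prod_pow c n hn
  rw [derivative_C_mul, hdP]
  -- split off the constant b
  have e0' : (C (((((N:ℕ)):ℂ) + β) * c ℓ / (1 - c ℓ) + ∑ j : Fin r, (n j : ℂ) / (1 - c j))
        : Polynomial ℂ)
      = C (∑ j : Fin r, (n j : ℂ) / (1 - c j))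
        - C (((N:ℕ):ℂ) + β) * C (c ℓ * (c ℓ - 1)⁻¹) := by
    rw [← map_mul, ← map_sub]
    congr 1
    have h1 : ((1:ℂ) - c ℓ)⁻¹ = -(c ℓ - 1)⁻¹ := by
      rw [show (1:ℂ) - c ℓ = -(c ℓ - 1) by ring, inv_neg]
    rw [div_eq_mul_inv, h1]
    ring
  rw [e0']
  -- the final polynomial identity
  have hfin : X * (C D⁻¹ * ∑ j, C ((n j : ℂ)) * Qp j)
        - C (∑ j : Fin r, (n j : ℂ) / (1 - c j)) * (C D⁻¹ * P)
      = ∑ j : Fin r, C (c j * (n j : ℂ) * ((c j - 1)⁻¹ * (c j - 1)⁻¹))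
          * ((X + 1) * (C ((c j - 1) * D⁻¹) * Qp j)) := by
    have hsC : (C (∑ j : Fin r, (n j : ℂ) / (1 - c j)) : Polynomial ℂ)
        = ∑ j : Fin r, C ((n j : ℂ) * (-(c j - 1)⁻¹)) := by
      rw [map_sum]
      refine Finset.sum_congr rfl fun j _ => ?_
      congr 1
      rw [div_eq_mul_inv]
      congr 1
      rw [← inv_neg, neg_sub]
    rw [hsC, Finset.mul_sum, Finset.mul_sum, Finset.sum_mul, ← Finset.sum_sub_distrib]
    refine Finset.sum_congr rfl fun j _ => ?_
    have hPj : P = (X + C (c j)) * Qp j :=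
      (prod_pow_pred (fun i => X + C (c i)) n hn j).symm
    rw [hPj]
    linear_combination per_j (c j) ((n j : ℂ)) ((c j - 1)⁻¹) D⁻¹ (Qp j)
      (mul_inv_cancel₀ (hcne j))
  have hfinPhi : Phi β N (X * (C D⁻¹ * ∑ j, C ((n j : ℂ)) * Qp j))
        - C (∑ j : Fin r, (n j : ℂ) / (1 - c j)) * Phi β N (C D⁻¹ * P)
      = Phi β N (∑ j : Fin r, C (c j * (n j : ℂ) * ((c j - 1)⁻¹ * (c j - 1)⁻¹))
          * ((X + 1) * (C ((c j - 1) * D⁻¹) * Qp j))) := by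
    rw [← Phi_C_mul, ← Phi_sub, hfin]
  linear_combination hfinPhi - hcomb
end

section
/- Let r ≥ 1, let a_0,…,a_{r−1} be nonzero complex numbers, let n = (n_0,…,n_{r−1}) ∈ ℕ^r, and fix x ∈ ℂ. For real β with β > 0 and a_ℓ + β ≠ 0 for all ℓ, set c_ℓ(β) = a_ℓ/(a_ℓ+β). Then, as β → +∞ along the reals, M^{β, c(β)}_n(x) converges to C^a_n(x); that is, lim_{β→∞} Σ_{k_0=0}^{n_0}⋯Σ_{k_{r−1}=0}^{n_{r−1}} (Π_ℓ binom(n_ℓ,k_ℓ)·c_ℓ(β)^{n_ℓ−k_ℓ}/(c_ℓ(β)−1)^{n_ℓ})·(−x)_{|k|}·(x+β)_{|n|−|k|} = Σ_{k_0=0}^{n_0}⋯Σ_{k_{r−1}=0}^{n_{r−1}} (Π_ℓ binom(n_ℓ,k_ℓ)·(−a_ℓ)^{n_ℓ−k_ℓ})·(−1)^{|k|}·(−x)_{|k|}. -/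
/-- The explicit type II Meixner--Angelesco polynomial of the first kind
(as a function of `x = z^r`). -/
noncomputable def meixnerAngelesco (r : ℕ) (β : ℂ) (c : Fin r → ℂ) (n : Fin r → ℕ)
    (x : ℂ) : ℂ :=
  ∑ k ∈ Fintype.piFinset (fun i : Fin r => Finset.range (n i + 1)),
    (∏ ℓ : Fin r, ((n ℓ).choose (k ℓ) : ℂ) * (c ℓ) ^ (n ℓ - k ℓ) / (c ℓ - 1) ^ (n ℓ)) *
      poch (-x) (∑ i, k i) * poch (x + β) ((∑ i, n i) - ∑ i, k i)

/-! The limit is taken summand by summand. With `c = a / (a + β)` one has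
`c / (c - 1) = -a / β` and `1 / (c - 1) = -(a + β) / β`, so each Meixner summand is the
corresponding Charlier summand times `∏ ℓ ((a ℓ + β) / β) ^ k ℓ` and
`(x + β)_{|n|-|k|} / β ^ (|n|-|k|)`, both of which tend to `1`. -/

open Filter Finset Topology

theorem div_add_pow_div_div_add_sub_one_pow {K : Type*} [Field K] {A B : K} (hB : B ≠ 0)
    (hAB : A + B ≠ 0) (d k : ℕ) :
    (A / (A + B)) ^ d / (A / (A + B) - 1) ^ (d + k)
      = (-A) ^ d * (-1) ^ k * ((A + B) / B) ^ k / B ^ d := by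
  have hsub : A / (A + B) - 1 = -B / (A + B) := by field_simp; ring
  have hratio : A / (A + B) / (A / (A + B) - 1) = -A / B := by rw [hsub]; field_simp
  have hinv : (A / (A + B) - 1)⁻¹ = -((A + B) / B) := by rw [hsub]; field_simp
  rw [pow_add, div_mul_eq_div_div, ← div_pow, hratio, div_eq_mul_inv _ (_ ^ k), ← inv_pow, hinv,
    neg_pow, div_pow]
  ring

theorem eventually_add_ofReal_ne_zero (a : ℂ) : ∀ᶠ β : ℝ in atTop, a + (β : ℂ) ≠ 0 := by
  filter_upwards [eventually_gt_atTop (-a.re)] with β hβ h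
  have := congrArg Complex.re h
  simp only [Complex.add_re, Complex.ofReal_re, Complex.zero_re] at this
  linarith

theorem tendsto_add_ofReal_div_ofReal (c : ℂ) :
    Tendsto (fun β : ℝ => (c + β) / (β : ℂ)) atTop (𝓝 1) := by
  have hinv : Tendsto (fun β : ℝ => ((β : ℂ))⁻¹) atTop (𝓝 0) := by
    simpa only [Function.comp_def, Complex.ofReal_inv, Complex.ofReal_zero] using
      (Complex.continuous_ofReal.tendsto 0).comp tendsto_inv_atTop_zero
  have hlim : Tendsto (fun β : ℝ => c * ((β : ℂ))⁻¹ + 1) atTop (𝓝 1) := by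
    simpa using (hinv.const_mul c).add_const 1
  refine hlim.congr' ?_
  filter_upwards [eventually_ne_atTop 0] with β hβ
  rw [add_div, div_self (Complex.ofReal_ne_zero.2 hβ), div_eq_mul_inv]

theorem tendsto_poch_add_ofReal_div_pow (y : ℂ) (m : ℕ) :
    Tendsto (fun β : ℝ => poch (y + β) m / (β : ℂ) ^ m) atTop (𝓝 1) := by
  have hfactor (i : ℕ) : Tendsto (fun β : ℝ => (y + β + i) / (β : ℂ)) atTop (𝓝 1) :=
    (tendsto_add_ofReal_div_ofReal (y + i)).congr fun β => by ring_nf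
  simpa [poch, prod_div_distrib] using tendsto_finsetProd (range m) fun i _ => hfactor i

theorem meixner_summand_eq {r : ℕ} {a : Fin r → ℂ} {n k : Fin r → ℕ} (hkn : ∀ ℓ, k ℓ ≤ n ℓ)
    (x : ℂ) {β : ℂ} (hβ : β ≠ 0) (haβ : ∀ ℓ, a ℓ + β ≠ 0) :
    (∏ ℓ, ((n ℓ).choose (k ℓ) : ℂ) * (a ℓ / (a ℓ + β)) ^ (n ℓ - k ℓ) /
        (a ℓ / (a ℓ + β) - 1) ^ n ℓ) *
      poch (-x) (∑ i, k i) * poch (x + β) ((∑ i, n i) - ∑ i, k i)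
      = (∏ ℓ, ((n ℓ).choose (k ℓ) : ℂ) * (-(a ℓ)) ^ (n ℓ - k ℓ)) *
          (-1) ^ (∑ i, k i) * poch (-x) (∑ i, k i) *
        (∏ ℓ, ((a ℓ + β) / β) ^ k ℓ) *
        (poch (x + β) ((∑ i, n i) - ∑ i, k i) / β ^ ((∑ i, n i) - ∑ i, k i)) := by
  have hfactor (ℓ : Fin r) :
      ((n ℓ).choose (k ℓ) : ℂ) * (a ℓ / (a ℓ + β)) ^ (n ℓ - k ℓ) / (a ℓ / (a ℓ + β) - 1) ^ n ℓ
        = ((n ℓ).choose (k ℓ) : ℂ) * (-(a ℓ)) ^ (n ℓ - k ℓ) * (-1) ^ k ℓ *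
            ((a ℓ + β) / β) ^ k ℓ / β ^ (n ℓ - k ℓ) := by
    obtain ⟨d, hd⟩ := Nat.exists_eq_add_of_le' (hkn ℓ)
    rw [hd, Nat.add_sub_cancel, mul_div_assoc, div_add_pow_div_div_add_sub_one_pow hβ (haβ ℓ)]
    ring
  have hsum : ∑ ℓ, (n ℓ - k ℓ) = (∑ i, n i) - ∑ i, k i :=
    sum_tsub_distrib _ fun ℓ _ => hkn ℓ
  simp only [hfactor, prod_div_distrib, prod_mul_distrib, prod_pow_eq_pow_sum, hsum]
  field_simp

theorem meixner_to_charlier_limit_general (r : ℕ) (a : Fin r → ℂ) (n : Fin r → ℕ) (x : ℂ) :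
    Filter.Tendsto
      (fun β : ℝ =>
        meixnerAngelesco r (β : ℂ) (fun ℓ => a ℓ / (a ℓ + (β : ℂ))) n x)
      Filter.atTop (nhds (charlierAngelesco r a n x)) := by
  refine tendsto_finsetSum _ fun k hk => ?_
  have hkn (ℓ : Fin r) : k ℓ ≤ n ℓ :=
    Nat.lt_succ_iff.1 (mem_range.1 (Fintype.mem_piFinset.1 hk ℓ))
  have hratios : Tendsto (fun β : ℝ => ∏ ℓ, ((a ℓ + β) / (β : ℂ)) ^ k ℓ) atTop (𝓝 1) := by
    simpa using tendsto_finsetProd univ fun ℓ _ => (tendsto_add_ofReal_div_ofReal (a ℓ)).pow (k ℓ)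
  apply Tendsto.congr'
  · filter_upwards [eventually_ne_atTop 0,
      eventually_all.2 fun ℓ => eventually_add_ofReal_ne_zero (a ℓ)] with β hβ haβ
    exact (meixner_summand_eq hkn x (Complex.ofReal_ne_zero.2 hβ) haβ).symm
  · simpa only [mul_one] using (hratios.const_mul _).mul (tendsto_poch_add_ofReal_div_pow x _)

/-- Limit relation from Meixner--Angelesco to Charlier--Angelesco
polynomials: with `c_ℓ(β) = a_ℓ/(a_ℓ+β)`, as `β → +∞` along the reals,
`M^{β,c(β)}_n(x) → C^a_n(x)`. -/
theorem meixner_to_charlier_limit (r : ℕ) (hr : 1 ≤ r) (a : Fin r → ℂ)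
    (ha : ∀ ℓ, a ℓ ≠ 0) (n : Fin r → ℕ) (x : ℂ) :
    Filter.Tendsto
      (fun β : ℝ =>
        meixnerAngelesco r (β : ℂ) (fun ℓ => a ℓ / (a ℓ + (β : ℂ))) n x)
      Filter.atTop (nhds (charlierAngelesco r a n x)) :=
  meixner_to_charlier_limit_general r a n x
end
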